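/- arXiv:2512.13375 — 10 statements merged into one kernel-verified Lean document; each statement's English description precedes it below -/
import Mathlib

section
/- Let a be an element of SL(2,ℂ) with a ≠ e and a ≠ −e, and set t = tr(a). Then an element c of SL(2,ℂ) commutes with a if and only if there exist μ, ν ∈ ℂ with c = μ·a + ν·e (as 2×2 matrices) and μ² + t·μ·ν + ν² = 1. -/
/-!
A non-scalar `2 × 2` matrix `A` has only the matrices `μ A + ν` as commutants, and when
`det A = 1` the determinant of `μ A + ν` is the quadratic form `μ² + tr A · μν + ν²`; membership
of `μ a + ν e` in `SL(2,ℂ)` is exactly the condition that this form equals one.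
-/

noncomputable def trSL (A : Matrix.SpecialLinearGroup (Fin 2) ℂ) : ℂ :=
  Matrix.trace (A : Matrix (Fin 2) (Fin 2) ℂ)

theorem exists_eq_smul_of_mul_eq_mul {ι K : Type*} [Field K] {x y : ι → K} (hx : x ≠ 0)
    (h : ∀ i j, x i * y j = x j * y i) : ∃ μ : K, y = μ • x := by
  obtain ⟨i, hi⟩ := Function.ne_iff.mp hx
  refine ⟨y i / x i, funext fun j => ?_⟩
  rw [Pi.smul_apply, smul_eq_mul, div_mul_eq_mul_div, eq_div_iff hi]
  linear_combination h i j

namespace Matrix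

theorem det_smul_add_smul_one_fin_two {R : Type*} [CommRing R] (A : Matrix (Fin 2) (Fin 2) R)
    (μ ν : R) : det (μ • A + ν • 1) = μ ^ 2 * det A + trace A * μ * ν + ν ^ 2 := by
  simp only [det_fin_two, trace_fin_two, add_apply, smul_apply, one_apply_eq,
    one_apply_ne Fin.zero_ne_one, one_apply_ne Fin.zero_ne_one.symm, smul_eq_mul]
  ring

theorem commute_iff_exists_eq_smul_add_smul_one_fin_two {K : Type*} [Field K]
    {A : Matrix (Fin 2) (Fin 2) K} (hA : ∀ s : K, A ≠ s • 1) (C : Matrix (Fin 2) (Fin 2) K) :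
    Commute C A ↔ ∃ μ ν : K, C = μ • A + ν • 1 := by
  refine ⟨fun hCA => ?_, ?_⟩
  · -- `C` commutes with `A` iff `(c₁₁ - c₂₂, c₁₂, c₂₁)` is proportional to `(a₁₁ - a₂₂, a₁₂, a₂₁)`.
    set x : Fin 3 → K := ![A 0 0 - A 1 1, A 0 1, A 1 0]
    have hx : x ≠ 0 := by
      intro h0
      have hd : A 0 0 - A 1 1 = 0 := congrFun h0 0
      have hb : A 0 1 = 0 := congrFun h0 1
      have hc : A 1 0 = 0 := congrFun h0 2
      apply hA (A 0 0)
      ext i j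
      fin_cases i <;> fin_cases j <;> simp [hb, hc]
      linear_combination -hd
    have entry (i j : Fin 2) : (C * A) i j = (A * C) i j := by rw [hCA.eq]
    simp only [mul_apply, Fin.sum_univ_two] at entry
    obtain ⟨μ, hμ⟩ := exists_eq_smul_of_mul_eq_mul (y := ![C 0 0 - C 1 1, C 0 1, C 1 0]) hx
      (by intro i j; fin_cases i <;> fin_cases j <;> simp [x] <;> grind)
    have hd : C 0 0 - C 1 1 = μ * (A 0 0 - A 1 1) := congrFun hμ 0
    have hb : C 0 1 = μ * A 0 1 := congrFun hμ 1
    have hc : C 1 0 = μ * A 1 0 := congrFun hμ 2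
    refine ⟨μ, C 0 0 - μ * A 0 0, ?_⟩
    ext i j
    fin_cases i <;> fin_cases j <;> simp [hb, hc]
    linear_combination -hd
  · rintro ⟨μ, ν, rfl⟩
    exact ((Commute.refl A).smul_left μ).add_left ((Commute.one_left A).smul_left ν)

end Matrix

namespace Matrix.SpecialLinearGroup

theorem coe_ne_smul_one_of_ne_one_of_ne_neg_one {R : Type*} [CommRing R] [NoZeroDivisors R]
    {a : SpecialLinearGroup (Fin 2) R} (ha1 : (a : Matrix (Fin 2) (Fin 2) R) ≠ 1)
    (ha2 : (a : Matrix (Fin 2) (Fin 2) R) ≠ -1) (s : R) :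
    (a : Matrix (Fin 2) (Fin 2) R) ≠ s • 1 := by
  intro hs
  have hdet : s ^ 2 = 1 := by simpa [hs, det_smul] using a.det_coe
  rcases sq_eq_one_iff.mp hdet with rfl | rfl
  · exact ha1 (by simpa using hs)
  · exact ha2 (by simpa using hs)

end Matrix.SpecialLinearGroup

/-- Lemma 2.1(i), set-theoretic form: for `a ∈ SL(2,ℂ)` with `a ≠ ±e` and `t = tr a`,
an element `c` commutes with `a` iff `c = μ•a + ν•e` for some `μ, ν` with
`μ² + tμν + ν² = 1`. -/
theorem centralizer_eq_linear_combinations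
    (a : Matrix.SpecialLinearGroup (Fin 2) ℂ)
    (ha1 : (a : Matrix (Fin 2) (Fin 2) ℂ) ≠ 1)
    (ha2 : (a : Matrix (Fin 2) (Fin 2) ℂ) ≠ -1)
    (t : ℂ) (ht : t = trSL a)
    (c : Matrix.SpecialLinearGroup (Fin 2) ℂ) :
    c * a = a * c ↔
      ∃ μ ν : ℂ,
        (c : Matrix (Fin 2) (Fin 2) ℂ) = μ • (a : Matrix (Fin 2) (Fin 2) ℂ) + ν • 1 ∧
        μ ^ 2 + t * μ * ν + ν ^ 2 = 1 := by
  have hcomm : c * a = a * c ↔ Commute (c : Matrix (Fin 2) (Fin 2) ℂ) a := by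
    rw [commute_iff_eq, ← Matrix.SpecialLinearGroup.coe_mul, ← Matrix.SpecialLinearGroup.coe_mul]
    exact Subtype.coe_injective.eq_iff.symm
  rw [hcomm, Matrix.commute_iff_exists_eq_smul_add_smul_one_fin_two
    (Matrix.SpecialLinearGroup.coe_ne_smul_one_of_ne_one_of_ne_neg_one ha1 ha2)]
  refine exists₂_congr fun μ ν => ⟨fun hc => ⟨hc, ?_⟩, And.left⟩
  calc μ ^ 2 + t * μ * ν + ν ^ 2 = (μ • (a : Matrix (Fin 2) (Fin 2) ℂ) + ν • 1).det := by
        rw [Matrix.det_smul_add_smul_one_fin_two, a.det_coe, mul_one, ht, trSL]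
    _ = 1 := by rw [← hc, c.det_coe]
end

section
/- Let t ∈ ℂ with t ≠ 2 and t ≠ −2, let a ∈ SL(2,ℂ) with a ≠ ±e and tr(a) = t, and let r ∈ ℂ with r ≠ 2 and r ≠ t² − 2. Then there is a bijection between the set C_t^r(a) = {x ∈ SL(2,ℂ) : x ≠ ±e, tr(x) = t, tr(ax) = r} and ℂ* = ℂ∖{0}. -/
open Matrix Cardinal

/-- Any `a ∈ SL(2,ℂ)` with trace `t ≠ ±2` is conjugate (by some invertible `Q`)
to the diagonal matrix `diag(l, t - l)` where `l` is a root of `z² - t z + 1`. -/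
lemma exists_conj_diag
    (t : ℂ) (ht2 : t ≠ 2) (ht2' : t ≠ -2)
    (a : Matrix.SpecialLinearGroup (Fin 2) ℂ)
    (hta : trSL a = t) :
    ∃ (l : ℂ) (Q : Matrix (Fin 2) (Fin 2) ℂ),
      l * (t - l) = 1 ∧ 2 * l - t ≠ 0 ∧ IsUnit Q.det ∧
      (a : Matrix (Fin 2) (Fin 2) ℂ) * Q = Q * !![l, 0; 0, t - l] := by
  set A := (a : Matrix (Fin 2) (Fin 2) ℂ) 0 0 with hA
  set B := (a : Matrix (Fin 2) (Fin 2) ℂ) 0 1 with hB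
  set C := (a : Matrix (Fin 2) (Fin 2) ℂ) 1 0 with hC
  set D := (a : Matrix (Fin 2) (Fin 2) ℂ) 1 1 with hD
  have hdet : A * D - B * C = 1 := by
    have := a.property
    rw [Matrix.det_fin_two] at this
    exact this
  have htr : A + D = t := by
    have := hta
    rw [trSL, Matrix.trace_fin_two] at this
    exact this
  have haeq : (a : Matrix (Fin 2) (Fin 2) ℂ) = !![A, B; C, D] := Matrix.eta_fin_two _
  by_cases hB0 : B = 0
  · -- lower-triangular case; eigenvalues are A and D
    have hAD : A * D = 1 := by rw [← hdet, hB0]; ring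
    have hAne : A - D ≠ 0 := by
      intro h
      have hAD' : A = D := by linear_combination h
      have hA2 : A * A = 1 := by rw [← hAD, hAD']
      have : (A - 1) * (A + 1) = 0 := by linear_combination hA2
      rcases mul_eq_zero.mp this with h1 | h1
      · exact ht2 (by rw [← htr, ← hAD']; linear_combination 2 * h1)
      · exact ht2' (by rw [← htr, ← hAD']; linear_combination 2 * h1)
    refine ⟨A, !![A - D, 0; C, 1], ?_, ?_, ?_, ?_⟩
    · have : t - A = D := by linear_combination -htr
      rw [this]; exact hAD
    · intro h; exact hAne (by linear_combination h - htr)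
    · rw [Matrix.det_fin_two_of]
      simpa using hAne
    · have htA : t - A = D := by linear_combination -htr
      rw [haeq, htA, hB0]
      ext i j
      fin_cases i <;> fin_cases j <;>
        simp [Matrix.mul_apply, Fin.sum_univ_two] <;> ring
  · -- B ≠ 0 : use an eigenvector basis
    obtain ⟨s, hs⟩ := IsAlgClosed.exists_pow_nat_eq (k := ℂ) (t ^ 2 - 4) (n := 2) (by norm_num)
    have hsne : s ≠ 0 := by
      intro h
      rw [h] at hs
      have : (t - 2) * (t + 2) = 0 := by linear_combination -hs
      rcases mul_eq_zero.mp this with h1 | h1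
      · exact ht2 (by linear_combination h1)
      · exact ht2' (by linear_combination h1)
    set l := (t + s) / 2 with hl
    have hroot : l * (t - l) = 1 := by
      rw [hl]; field_simp; linear_combination -hs
    have hd : 2 * l - t ≠ 0 := by
      rw [hl]; intro h; apply hsne; field_simp at h; linear_combination h
    refine ⟨l, !![B, B; l - A, (t - l) - A], hroot, hd, ?_, ?_⟩
    · rw [Matrix.det_fin_two_of]
      have : B * ((t - l) - A) - B * (l - A) = B * (t - 2 * l) := by ring
      rw [this]
      apply isUnit_iff_ne_zero.mpr
      exact mul_ne_zero hB0 (fun h => hd (by linear_combination -h))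
    · rw [haeq]
      ext i j
      fin_cases i <;> fin_cases j <;>
        simp [Matrix.mul_apply, Fin.sum_univ_two]
      · ring
      · ring
      · linear_combination hroot + l * htr - hdet
      · linear_combination hroot + (t - l) * htr - hdet

/-- Lemma 2.2, case `t ≠ ±2`: for `a ∈ G(t)` and `r ∈ B_t`, the set
`C_t^r(a) = {x ∈ G(t) : tr(ax) = r}` is in bijection with `ℂ*`. -/
theorem C_t_r_equiv_units
    (t : ℂ) (ht2 : t ≠ 2) (ht2' : t ≠ -2)
    (a : Matrix.SpecialLinearGroup (Fin 2) ℂ)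
    (ha1 : (a : Matrix (Fin 2) (Fin 2) ℂ) ≠ 1)
    (ha2 : (a : Matrix (Fin 2) (Fin 2) ℂ) ≠ -1)
    (hta : trSL a = t)
    (r : ℂ) (hr2 : r ≠ 2) (hr : r ≠ t ^ 2 - 2) :
    Nonempty
      ({x : Matrix.SpecialLinearGroup (Fin 2) ℂ //
          (x : Matrix (Fin 2) (Fin 2) ℂ) ≠ 1 ∧ (x : Matrix (Fin 2) (Fin 2) ℂ) ≠ -1 ∧
          trSL x = t ∧ trSL (a * x) = r} ≃ ℂˣ) := by
  obtain ⟨l, Q, hroot, hd, hQ, hconj⟩ := exists_conj_diag t ht2 ht2' a hta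
  set d := 2 * l - t with hdd
  set p := (r - (t - l) * t) / d with hpdef
  set u := (l * t - r) / d with hudef
  set c := p * u - 1 with hcdef
  have hpd : p * d = r - (t - l) * t := div_mul_cancel₀ _ hd
  have hud : u * d = l * t - r := div_mul_cancel₀ _ hd
  have hpu : p + u = t := by
    rw [hpdef, hudef]; field_simp; ring
  have hlr : l * p + (t - l) * u = r := by
    rw [hpdef, hudef]; field_simp; ring
  have hcd : c * d ^ 2 = -((r - 2) * (r - (t ^ 2 - 2))) := by
    rw [hcdef]
    linear_combination (u * d) * hpd + (r - (t - l) * t) * hud + (4 - t ^ 2) * hroot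
  have hc0 : c ≠ 0 := by
    intro h
    rw [h, zero_mul] at hcd
    have h2 : (r - 2) * (r - (t ^ 2 - 2)) = 0 := by linear_combination hcd
    rcases mul_eq_zero.mp h2 with h3 | h3
    · exact hr2 (by linear_combination h3)
    · exact hr (by linear_combination h3)
  -- conjugation by Q is injective
  have conj_inj : ∀ M N : Matrix (Fin 2) (Fin 2) ℂ, Q * M * Q⁻¹ = Q * N * Q⁻¹ → M = N := by
    intro M N h
    have h2 : Q⁻¹ * (Q * (M * Q⁻¹)) = Q⁻¹ * (Q * (N * Q⁻¹)) := by
      rw [← Matrix.mul_assoc Q M, ← Matrix.mul_assoc Q N, h]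
    rw [Matrix.nonsing_inv_mul_cancel_left _ _ hQ, Matrix.nonsing_inv_mul_cancel_left _ _ hQ] at h2
    have h3 : M * Q⁻¹ * Q = N * Q⁻¹ * Q := by rw [h2]
    rwa [Matrix.nonsing_inv_mul_cancel_right _ _ hQ, Matrix.nonsing_inv_mul_cancel_right _ _ hQ] at h3
  -- the explicit family of solutions
  set m : ℂˣ → Matrix (Fin 2) (Fin 2) ℂ := fun q => !![p, (q : ℂ); c * (q : ℂ)⁻¹, u] with hm
  have hdetm : ∀ q : ℂˣ, (m q).det = 1 := by
    intro q
    rw [hm]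
    rw [Matrix.det_fin_two_of]
    have : (q : ℂ) * (c * ((q : ℂ))⁻¹) = c := by
      field_simp
    rw [this, hcdef]; ring
  have hdetx : ∀ q : ℂˣ, (Q * m q * Q⁻¹).det = 1 := by
    intro q
    rw [Matrix.det_mul, Matrix.det_mul, hdetm, mul_one, Matrix.det_nonsing_inv,
      Ring.mul_inverse_cancel _ hQ]
  set f : ℂˣ → {x : Matrix.SpecialLinearGroup (Fin 2) ℂ //
      (x : Matrix (Fin 2) (Fin 2) ℂ) ≠ 1 ∧ (x : Matrix (Fin 2) (Fin 2) ℂ) ≠ -1 ∧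
      trSL x = t ∧ trSL (a * x) = r} := fun q =>
    ⟨⟨Q * m q * Q⁻¹, hdetx q⟩, by
      constructor
      · intro h
        have h1 : Q * m q * Q⁻¹ = Q * 1 * Q⁻¹ := by
          rw [Matrix.mul_one, Matrix.mul_nonsing_inv _ hQ]
          exact h
        have h2 : m q = 1 := conj_inj _ _ h1
        have h3 : (m q) 0 1 = (1 : Matrix (Fin 2) (Fin 2) ℂ) 0 1 := by rw [h2]
        rw [hm] at h3
        simp [Matrix.one_apply] at h3
      constructor
      · intro h
        have h1 : Q * m q * Q⁻¹ = Q * (-1) * Q⁻¹ := by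
          rw [Matrix.mul_neg, Matrix.mul_one, Matrix.neg_mul, Matrix.mul_nonsing_inv _ hQ]
          exact h
        have h2 : m q = -1 := conj_inj _ _ h1
        have h3 : (m q) 0 1 = (-1 : Matrix (Fin 2) (Fin 2) ℂ) 0 1 := by rw [h2]
        rw [hm] at h3
        simp [Matrix.one_apply] at h3
      constructor
      · show Matrix.trace (Q * m q * Q⁻¹) = t
        rw [Matrix.trace_mul_comm, ← Matrix.mul_assoc, Matrix.nonsing_inv_mul _ hQ,
          Matrix.one_mul, hm]
        rw [Matrix.trace_fin_two_of]
        exact hpu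
      · show Matrix.trace ((a : Matrix (Fin 2) (Fin 2) ℂ) * (Q * m q * Q⁻¹)) = r
        rw [← Matrix.mul_assoc, ← Matrix.mul_assoc, hconj]
        rw [Matrix.trace_mul_comm, ← Matrix.mul_assoc, ← Matrix.mul_assoc,
          Matrix.nonsing_inv_mul _ hQ, Matrix.one_mul, hm]
        rw [Matrix.mul_fin_two, Matrix.trace_fin_two_of]
        calc l * p + 0 * (c * ((q : ℂ))⁻¹) + ((0 : ℂ) * (q : ℂ) + (t - l) * u)
            = l * p + (t - l) * u := by ring
          _ = r := hlr⟩
  have finj : Function.Injective f := by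
    intro q q' h
    have h1 : Q * m q * Q⁻¹ = Q * m q' * Q⁻¹ := congrArg (fun z => ((z.1 : Matrix.SpecialLinearGroup (Fin 2) ℂ) : Matrix (Fin 2) (Fin 2) ℂ)) h
    have h2 : m q = m q' := conj_inj _ _ h1
    have h3 : (m q) 0 1 = (m q') 0 1 := by rw [h2]
    rw [hm] at h3
    simp at h3
    exact Units.ext h3
  -- cardinality computations
  have hle1 : #ℂˣ ≤ #{x : Matrix.SpecialLinearGroup (Fin 2) ℂ //
      (x : Matrix (Fin 2) (Fin 2) ℂ) ≠ 1 ∧ (x : Matrix (Fin 2) (Fin 2) ℂ) ≠ -1 ∧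
      trSL x = t ∧ trSL (a * x) = r} := Cardinal.mk_le_of_injective finj
  have hmat : #(Matrix (Fin 2) (Fin 2) ℂ) = 𝔠 := by
    have h1 : #(Matrix (Fin 2) (Fin 2) ℂ) = #(Fin 2 → Fin 2 → ℂ) := rfl
    have key : ∀ (β : Type) [inst : Fintype β], #β = 2 → ∀ (γ : Type), #γ = 𝔠 → #(β → γ) = 𝔠 := by
      intro β _ hβ γ hγ
      rw [← Cardinal.power_def, hβ, hγ]
      have : ((2 : Cardinal) = ((2 : ℕ) : Cardinal)) := by norm_num
      rw [this]
      exact Cardinal.power_nat_eq Cardinal.aleph0_le_continuum (by norm_num)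
    have hfin : #(Fin 2) = 2 := by simp
    have h2 : #(Fin 2 → ℂ) = 𝔠 := key _ hfin _ mk_complex
    have h3 : #(Fin 2 → Fin 2 → ℂ) = 𝔠 := key _ hfin _ h2
    rw [h1, h3]
  have hle2 : #{x : Matrix.SpecialLinearGroup (Fin 2) ℂ //
      (x : Matrix (Fin 2) (Fin 2) ℂ) ≠ 1 ∧ (x : Matrix (Fin 2) (Fin 2) ℂ) ≠ -1 ∧
      trSL x = t ∧ trSL (a * x) = r} ≤ 𝔠 := by
    rw [← hmat]
    exact Cardinal.mk_le_of_injective (f := fun z => ((z.1 : Matrix.SpecialLinearGroup (Fin 2) ℂ) : Matrix (Fin 2) (Fin 2) ℂ))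
      (fun z z' hz => Subtype.ext (Subtype.ext hz))
  have hunits : #ℂˣ = 𝔠 := by
    rw [Cardinal.mk_congr (unitsEquivNeZero (G₀ := ℂ))]
    have h0 : #(↥({0}ᶜ : Set ℂ)) = #ℂ := by
      apply Cardinal.mk_compl_of_infinite
      rw [Cardinal.mk_singleton, mk_complex]
      exact lt_of_lt_of_le Cardinal.one_lt_aleph0 Cardinal.aleph0_le_continuum
    have h1 : #{a : ℂ // a ≠ 0} = #(↥({0}ᶜ : Set ℂ)) :=
      Cardinal.mk_congr (Equiv.subtypeEquivRight (by simp))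
    rw [h1, h0, mk_complex]
  refine Cardinal.eq.1 ?_
  rw [hunits]
  exact le_antisymm hle2 (hunits ▸ hle1)
end

section
/- Let t ∈ {2, −2}, let a ∈ SL(2,ℂ) with a ≠ ±e and tr(a) = t, and let r ∈ ℂ with r ≠ 2 (note that t² − 2 = 2 in this case). Then there is a bijection between the set C_t^r(a) = {x ∈ SL(2,ℂ) : x ≠ ±e, tr(x) = t, tr(ax) = r} and ℂ. -/
open Matrix MatrixGroups

/-- `C_t^r(a)` without the condition `x ≠ ±e`. -/
def traceLevelSet (a : SL(2, ℂ)) (t r : ℂ) : Set SL(2, ℂ) :=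
  {x | trSL x = t ∧ trSL (a * x) = r}

theorem trSL_mul (x y : SL(2, ℂ)) :
    trSL (x * y) = trace ((x : Matrix (Fin 2) (Fin 2) ℂ) * (y : Matrix (Fin 2) (Fin 2) ℂ)) := rfl

theorem trSL_mul_comm (x y : SL(2, ℂ)) : trSL (x * y) = trSL (y * x) :=
  trace_mul_comm (x : Matrix (Fin 2) (Fin 2) ℂ) y

theorem trSL_conj (g x : SL(2, ℂ)) : trSL (g * x * g⁻¹) = trSL x := by
  rw [trSL_mul_comm, inv_mul_cancel_left]

def traceLevelSetConjEquiv (g a : SL(2, ℂ)) (t r : ℂ) :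
    traceLevelSet a t r ≃ traceLevelSet (g * a * g⁻¹) t r :=
  (MulAut.conj g).toEquiv.subtypeEquiv fun x => by
    simp only [traceLevelSet, Set.mem_ofPred_eq, MulEquiv.toEquiv_eq_coe, MulEquiv.coe_toEquiv,
      MulAut.conj_apply, trSL_conj]
    rw [show g * a * g⁻¹ * (g * x * g⁻¹) = g * (a * x) * g⁻¹ by group, trSL_conj]

theorem coe_ne_one_of_mem_traceLevelSet {a x : SL(2, ℂ)} {t r : ℂ}
    (hx : x ∈ traceLevelSet a t r) (ha : trSL a = t) (hr : r ≠ 2) :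
    (x : Matrix (Fin 2) (Fin 2) ℂ) ≠ 1 := by
  intro h
  obtain ⟨hxt, hax⟩ := hx
  have hx2 : trSL x = 2 := by simp [trSL, h]
  have hax' : trSL (a * x) = trSL a := by simp [trSL, h]
  exact hr (by rw [← hax, hax', ha, ← hxt, hx2])

theorem coe_ne_neg_one_of_mem_traceLevelSet {a x : SL(2, ℂ)} {t r : ℂ}
    (hx : x ∈ traceLevelSet a t r) (ha : trSL a = t) (hr : r ≠ 2) :
    (x : Matrix (Fin 2) (Fin 2) ℂ) ≠ -1 := by
  intro h
  obtain ⟨hxt, hax⟩ := hx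
  have hx2 : trSL x = -2 := by simp [trSL, h]
  have hax' : trSL (a * x) = -trSL a := by simp [trSL, h]
  exact hr (by rw [← hax, hax', ha, ← hxt, hx2, neg_neg])

theorem exists_conj_eq_upperTriangular {a : SL(2, ℂ)} {t : ℂ} (ht : t ^ 2 = 4)
    (hta : trSL a = t) (ha1 : (a : Matrix (Fin 2) (Fin 2) ℂ) ≠ 1)
    (ha2 : (a : Matrix (Fin 2) (Fin 2) ℂ) ≠ -1) :
    ∃ (g : SL(2, ℂ)) (μ : ℂ), μ ≠ 0 ∧
      ((g * a * g⁻¹ : SL(2, ℂ)) : Matrix (Fin 2) (Fin 2) ℂ) = !![t / 2, μ; 0, t / 2] := by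
  obtain ⟨α, β, γ, δ, ha⟩ : ∃ α β γ δ, (a : Matrix (Fin 2) (Fin 2) ℂ) = !![α, β; γ, δ] :=
    ⟨_, _, _, _, eta_fin_two _⟩
  have hdet : α * δ - β * γ = 1 := by rw [← det_fin_two_of, ← ha]; exact a.2
  have htr : α + δ = t := by rw [← trace_fin_two_of, ← ha]; exact hta
  by_cases hγ : γ = 0
  · subst hγ
    have hα : α = t / 2 := by
      have : (α - t / 2) ^ 2 = 0 := by linear_combination -hdet + α * htr + ht / 4
      linear_combination pow_eq_zero_iff two_ne_zero |>.mp this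
    obtain rfl : δ = t / 2 := by linear_combination htr - hα
    subst hα
    have hβ : β ≠ 0 := by
      rintro rfl
      have : (t - 2) * (t + 2) = 0 := by linear_combination ht
      rcases mul_eq_zero.mp this with h | h
      · obtain rfl : t = 2 := by linear_combination h
        exact ha1 (by rw [ha, one_fin_two]; norm_num)
      · obtain rfl : t = -2 := by linear_combination h
        exact ha2 (by rw [ha, one_fin_two]; norm_num)
    exact ⟨1, β, hβ, by simpa only [inv_one, mul_one, one_mul] using ha⟩
  · -- `g⁻¹` maps `e₀, e₁` to the Jordan basis `(a - t / 2) e₀, -e₀ / γ` of `a`.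
    let g : SL(2, ℂ) := ⟨!![0, 1 / γ; -γ, α - t / 2], by
      rw [det_fin_two_of]; field_simp; ring⟩
    refine ⟨g, -1 / γ, by simpa using hγ, ?_⟩
    show !![0, 1 / γ; -γ, α - t / 2] * (a : Matrix (Fin 2) (Fin 2) ℂ) *
      adjugate !![0, 1 / γ; -γ, α - t / 2] = _
    rw [adjugate_fin_two_of, ha, mul_fin_two, mul_fin_two]
    simp only [EmbeddingLike.apply_eq_iff_eq, vecCons_inj, and_true]
    refine ⟨⟨?_, ?_⟩, ?_, ?_⟩
    all_goals field_simp
    · linear_combination 2 * htr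
    · ring
    · linear_combination γ * (4 * hdet - 2 * t * htr - ht)
    · ring

theorem sq_eq_four_of_coe_eq_upperTriangular {a : SL(2, ℂ)} {t μ : ℂ}
    (ha : (a : Matrix (Fin 2) (Fin 2) ℂ) = !![t / 2, μ; 0, t / 2]) : t ^ 2 = 4 := by
  have := a.2
  rw [ha, det_fin_two_of] at this
  linear_combination 4 * this

theorem trSL_mul_of_coe_eq_upperTriangular {a : SL(2, ℂ)} {t μ : ℂ}
    (ha : (a : Matrix (Fin 2) (Fin 2) ℂ) = !![t / 2, μ; 0, t / 2]) (x : SL(2, ℂ)) :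
    trSL (a * x) = t / 2 * trSL x + μ * x 1 0 := by
  rw [trSL_mul, ha, trSL, trace_fin_two, trace_fin_two]
  simp only [mul_apply, Fin.sum_univ_two, of_apply, cons_val', cons_val_zero, cons_val_one,
    empty_val', cons_val_fin_one]
  ring

noncomputable def ofTraceLowerLeft (t c p : ℂ) (hc : c ≠ 0) : SL(2, ℂ) :=
  ⟨!![p, (p * (t - p) - 1) / c; c, t - p], by rw [det_fin_two_of]; field_simp; ring⟩

theorem trSL_ofTraceLowerLeft (t c p : ℂ) (hc : c ≠ 0) :
    trSL (ofTraceLowerLeft t c p hc) = t := by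
  simp [trSL, ofTraceLowerLeft, trace_fin_two]

theorem eq_ofTraceLowerLeft {x : SL(2, ℂ)} {t c : ℂ} (hc : c ≠ 0) (hxt : trSL x = t)
    (hxc : x 1 0 = c) : x = ofTraceLowerLeft t c (x 0 0) hc := by
  have hdet : x 0 0 * x 1 1 - x 0 1 * x 1 0 = 1 := by rw [← det_fin_two]; exact x.2
  have htr : x 0 0 + x 1 1 = t := by rw [← trace_fin_two]; exact hxt
  subst hxc
  ext i j
  fin_cases i <;> fin_cases j
  · rfl
  · show x 0 1 = (x 0 0 * (t - x 0 0) - 1) / x 1 0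
    rw [eq_div_iff hc]
    linear_combination x 0 0 * htr - hdet
  · rfl
  · show x 1 1 = t - x 0 0
    linear_combination htr

theorem coe_one_zero_eq_of_mem_traceLevelSet {a x : SL(2, ℂ)} {t μ r : ℂ} (hμ : μ ≠ 0)
    (ha : (a : Matrix (Fin 2) (Fin 2) ℂ) = !![t / 2, μ; 0, t / 2])
    (hx : x ∈ traceLevelSet a t r) : x 1 0 = (r - 2) / μ := by
  obtain ⟨hxt, hax⟩ := hx
  rw [trSL_mul_of_coe_eq_upperTriangular ha, hxt] at hax
  rw [eq_div_iff hμ]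
  linear_combination hax - sq_eq_four_of_coe_eq_upperTriangular ha / 2

noncomputable def traceLevelSetEquivOfUpperTriangular {a : SL(2, ℂ)} {t μ r : ℂ} (hμ : μ ≠ 0)
    (hr : r ≠ 2) (ha : (a : Matrix (Fin 2) (Fin 2) ℂ) = !![t / 2, μ; 0, t / 2]) :
    traceLevelSet a t r ≃ ℂ :=
  have hc : (r - 2) / μ ≠ 0 := div_ne_zero (sub_ne_zero.mpr hr) hμ
  { toFun x := (x : SL(2, ℂ)) 0 0
    invFun p := ⟨ofTraceLowerLeft t ((r - 2) / μ) p hc, trSL_ofTraceLowerLeft .., by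
      rw [trSL_mul_of_coe_eq_upperTriangular ha, trSL_ofTraceLowerLeft]
      show t / 2 * t + μ * ((r - 2) / μ) = r
      rw [mul_div_cancel₀ _ hμ]
      linear_combination sq_eq_four_of_coe_eq_upperTriangular ha / 2⟩
    left_inv x := Subtype.ext
      (eq_ofTraceLowerLeft hc x.2.1 (coe_one_zero_eq_of_mem_traceLevelSet hμ ha x.2)).symm
    right_inv p := rfl }

/-- Lemma 2.2, case `t = ±2`: for `a ∈ G(t)` and `r ≠ 2`, the set
`C_t^r(a) = {x ∈ G(t) : tr(ax) = r}` is in bijection with `ℂ`. -/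
theorem C_t_r_equiv_complex
    (t : ℂ) (ht : t = 2 ∨ t = -2)
    (a : Matrix.SpecialLinearGroup (Fin 2) ℂ)
    (ha1 : (a : Matrix (Fin 2) (Fin 2) ℂ) ≠ 1)
    (ha2 : (a : Matrix (Fin 2) (Fin 2) ℂ) ≠ -1)
    (hta : trSL a = t)
    (r : ℂ) (hr2 : r ≠ 2) :
    Nonempty
      ({x : Matrix.SpecialLinearGroup (Fin 2) ℂ //
          (x : Matrix (Fin 2) (Fin 2) ℂ) ≠ 1 ∧ (x : Matrix (Fin 2) (Fin 2) ℂ) ≠ -1 ∧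
          trSL x = t ∧ trSL (a * x) = r} ≃ ℂ) := by
  have ht4 : t ^ 2 = 4 := by rcases ht with rfl | rfl <;> norm_num
  obtain ⟨g, μ, hμ, hg⟩ := exists_conj_eq_upperTriangular ht4 hta ha1 ha2
  have hC : ∀ x : SL(2, ℂ), ((x : Matrix (Fin 2) (Fin 2) ℂ) ≠ 1 ∧
      (x : Matrix (Fin 2) (Fin 2) ℂ) ≠ -1 ∧ trSL x = t ∧ trSL (a * x) = r) ↔
      x ∈ traceLevelSet a t r := fun x =>
    ⟨fun ⟨_, _, hx⟩ => hx, fun hx => ⟨coe_ne_one_of_mem_traceLevelSet hx hta hr2,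
      coe_ne_neg_one_of_mem_traceLevelSet hx hta hr2, hx⟩⟩
  exact ⟨(Equiv.subtypeEquivRight hC).trans <| (traceLevelSetConjEquiv g a t r).trans <|
    traceLevelSetEquivOfUpperTriangular hμ hr2 hg⟩
end

section
/- Let t ∈ ℂ and let a₁, a₂ ∈ SL(2,ℂ) with a₁ ≠ ±e, a₂ ≠ ±e and tr(a₁) = tr(a₂) = t. Then there exists a nonzero vector v ∈ ℂ² that is an eigenvector of both a₁ and a₂ if and only if tr(a₁a₂) = 2 or tr(a₁a₂) = t² − 2. -/
/-!
For `2 × 2` matrices, Cayley–Hamilton gives `C X + X C = tr(X) C` for the commutator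
`C = A B - B A` and `X ∈ {A, B}`. Hence `ker C` is invariant under `A` and `B`, which commute
on it, so over an algebraically closed field `A` and `B` have a common eigenvector exactly when
`ker C ≠ 0`, i.e. when `det C = 0`. For `A, B ∈ SL(2, ℂ)` with `tr A = tr B = t` one computes
`det C = -(tr(AB) - 2)(tr(AB) - (t² - 2))`.
-/

theorem Module.End.exists_hasEigenvector_mem_of_le_comap {K V : Type*} [Field K] [IsAlgClosed K]
    [AddCommGroup V] [Module K V] [FiniteDimensional K V] (f : End K V) {W : Submodule K V}
    (hW : W ≠ ⊥) (hf : W ≤ W.comap f) : ∃ μ, ∃ v ∈ W, f.HasEigenvector μ v := by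
  have : Nontrivial W := Submodule.nontrivial_iff_ne_bot.mpr hW
  obtain ⟨μ, hμ⟩ := exists_eigenvalue (f.restrict hf)
  obtain ⟨w, hw_mem, hw_ne⟩ := hμ.exists_hasEigenvector
  refine ⟨μ, w, w.2, ?_, by simpa using hw_ne⟩
  rw [mem_eigenspace_iff] at hw_mem ⊢
  simpa using congrArg Subtype.val hw_mem

namespace Matrix

section CommRing

variable {R : Type*} [CommRing R]

theorem det_commutator_fin_two (A B : Matrix (Fin 2) (Fin 2) R) :
    (A * B - B * A).det = 4 * A.det * B.det + A.trace * B.trace * (A * B).trace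
      - (A * B).trace ^ 2 - A.trace ^ 2 * B.det - B.trace ^ 2 * A.det := by
  simp only [det_fin_two, trace_fin_two, sub_apply, mul_apply, Fin.sum_univ_two]
  ring

theorem sq_fin_two (X : Matrix (Fin 2) (Fin 2) R) : X ^ 2 = X.trace • X - X.det • 1 := by
  nontriviality R
  have hCH := X.aeval_self_charpoly
  simp only [charpoly_fin_two, map_add, map_sub, map_pow, map_mul, Polynomial.aeval_X,
    Polynomial.aeval_C, Algebra.algebraMap_eq_smul_one, smul_mul_assoc, one_mul] at hCH
  rw [← sub_eq_zero, ← hCH]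
  abel

theorem commutator_mul_add_mul_commutator_fin_two (X Y : Matrix (Fin 2) (Fin 2) R) :
    (X * Y - Y * X) * X + X * (X * Y - Y * X) = X.trace • (X * Y - Y * X) :=
  calc (X * Y - Y * X) * X + X * (X * Y - Y * X) = X ^ 2 * Y - Y * X ^ 2 := by noncomm_ring
    _ = X.trace • (X * Y - Y * X) := by
      simp only [sq_fin_two, sub_mul, mul_sub, smul_mul_assoc, mul_smul_comm, one_mul,
        mul_one, smul_sub]
      abel

theorem commutator_mulVec_mulVec_left_eq_zero (X Y : Matrix (Fin 2) (Fin 2) R) {v : Fin 2 → R}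
    (hv : (X * Y - Y * X) *ᵥ v = 0) : (X * Y - Y * X) *ᵥ (X *ᵥ v) = 0 := by
  rw [mulVec_mulVec, eq_sub_of_add_eq (commutator_mul_add_mul_commutator_fin_two X Y),
    sub_mulVec, smul_mulVec, ← mulVec_mulVec, hv, mulVec_zero, smul_zero, sub_zero]

theorem commutator_mulVec_mulVec_right_eq_zero (X Y : Matrix (Fin 2) (Fin 2) R) {v : Fin 2 → R}
    (hv : (X * Y - Y * X) *ᵥ v = 0) : (X * Y - Y * X) *ᵥ (Y *ᵥ v) = 0 := by
  rw [← neg_sub, neg_mulVec, neg_eq_zero] at hv ⊢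
  exact commutator_mulVec_mulVec_left_eq_zero Y X hv

end CommRing

theorem det_commutator_eq_zero_of_common_eigenvector {n K : Type*} [Fintype n] [DecidableEq n]
    [Field K] {A B : Matrix n n K} {v : n → K} (hv : v ≠ 0) {μ ν : K} (hA : A *ᵥ v = μ • v)
    (hB : B *ᵥ v = ν • v) : (A * B - B * A).det = 0 := by
  refine exists_mulVec_eq_zero_iff.mp ⟨v, hv, ?_⟩
  rw [sub_mulVec, ← mulVec_mulVec, ← mulVec_mulVec, hA, hB, mulVec_smul, mulVec_smul, hA, hB,
    smul_smul, smul_smul, mul_comm, sub_self]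

theorem exists_common_eigenvector_of_det_commutator_eq_zero {K : Type*} [Field K] [IsAlgClosed K]
    {A B : Matrix (Fin 2) (Fin 2) K} (h : (A * B - B * A).det = 0) :
    ∃ v : Fin 2 → K, v ≠ 0 ∧ (∃ μ : K, A *ᵥ v = μ • v) ∧ ∃ ν : K, B *ᵥ v = ν • v := by
  set W := LinearMap.ker (toLin' (A * B - B * A))
  have mem_W (v : Fin 2 → K) : v ∈ W ↔ (A * B - B * A) *ᵥ v = 0 := by
    rw [LinearMap.mem_ker, toLin'_apply]
  have hW : W ≠ ⊥ := by
    obtain ⟨v, hv, hCv⟩ := exists_mulVec_eq_zero_iff.mpr h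
    exact (Submodule.ne_bot_iff W).mpr ⟨v, (mem_W v).mpr hCv, hv⟩
  have hAW : W ≤ W.comap (toLin' A) := fun v hv ↦ by
    rw [Submodule.mem_comap, toLin'_apply, mem_W]
    exact commutator_mulVec_mulVec_left_eq_zero A B ((mem_W v).mp hv)
  have hBW : W ≤ W.comap (toLin' B) := fun v hv ↦ by
    rw [Submodule.mem_comap, toLin'_apply, mem_W]
    exact commutator_mulVec_mulVec_right_eq_zero A B ((mem_W v).mp hv)
  obtain ⟨μ, v, hvW, hv⟩ := Module.End.exists_hasEigenvector_mem_of_le_comap (toLin' A) hW hAW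
  set E := W ⊓ Module.End.eigenspace (toLin' A) μ
  have hE : E ≠ ⊥ := (Submodule.ne_bot_iff E).mpr ⟨v, ⟨hvW, hv.1⟩, hv.2⟩
  have hBE : E ≤ E.comap (toLin' B) := by
    intro w hw
    obtain ⟨hwW, hwE⟩ := Submodule.mem_inf.mp hw
    refine Submodule.mem_inf.mpr ⟨hBW hwW, ?_⟩
    have hcomm : A *ᵥ (B *ᵥ w) = B *ᵥ (A *ᵥ w) := by
      rwa [mem_W, sub_mulVec, sub_eq_zero, ← mulVec_mulVec, ← mulVec_mulVec] at hwW
    rw [Module.End.mem_eigenspace_iff, toLin'_apply] at hwE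
    rw [Module.End.mem_eigenspace_iff, toLin'_apply, toLin'_apply, hcomm, hwE, mulVec_smul]
  obtain ⟨ν, u, huE, hu⟩ := Module.End.exists_hasEigenvector_mem_of_le_comap (toLin' B) hE hBE
  have huA := (Submodule.mem_inf.mp huE).2
  rw [Module.End.mem_eigenspace_iff, toLin'_apply] at huA
  exact ⟨u, hu.2, ⟨μ, huA⟩, ν, by simpa only [toLin'_apply] using hu.apply_eq_smul⟩

end Matrix

theorem reducible_iff_trace_general
    (t : ℂ) (a₁ a₂ : Matrix.SpecialLinearGroup (Fin 2) ℂ)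
    (ht₁ : trSL a₁ = t) (ht₂ : trSL a₂ = t) :
    (∃ v : Fin 2 → ℂ, v ≠ 0 ∧
        (∃ μ : ℂ, Matrix.mulVec (a₁ : Matrix (Fin 2) (Fin 2) ℂ) v = μ • v) ∧
        (∃ ν : ℂ, Matrix.mulVec (a₂ : Matrix (Fin 2) (Fin 2) ℂ) v = ν • v)) ↔
      (trSL (a₁ * a₂) = 2 ∨ trSL (a₁ * a₂) = t ^ 2 - 2) := by
  set A : Matrix (Fin 2) (Fin 2) ℂ := ↑a₁
  set B : Matrix (Fin 2) (Fin 2) ℂ := ↑a₂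
  have hAB : (A * B).trace = trSL (a₁ * a₂) := rfl
  have hdet : (A * B - B * A).det =
      -((trSL (a₁ * a₂) - 2) * (trSL (a₁ * a₂) - (t ^ 2 - 2))) := by
    rw [Matrix.det_commutator_fin_two, a₁.2, a₂.2, hAB, show A.trace = t from ht₁,
      show B.trace = t from ht₂]
    ring
  constructor
  · rintro ⟨v, hv, ⟨μ, hμ⟩, ⟨ν, hν⟩⟩
    have hC := Matrix.det_commutator_eq_zero_of_common_eigenvector hv hμ hν
    rwa [hdet, neg_eq_zero, mul_eq_zero, sub_eq_zero, sub_eq_zero] at hC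
  · intro h
    refine Matrix.exists_common_eigenvector_of_det_commutator_eq_zero ?_
    rcases h with h | h <;> simp [hdet, h]

/-- Lemma 2.3(i): a pair `(a₁, a₂) ∈ G(t)²` has a common eigenvector if and only if
`tr(a₁a₂) = 2` or `tr(a₁a₂) = t² - 2`. -/
theorem reducible_iff_trace
    (t : ℂ) (a₁ a₂ : Matrix.SpecialLinearGroup (Fin 2) ℂ)
    (h₁1 : (a₁ : Matrix (Fin 2) (Fin 2) ℂ) ≠ 1)
    (h₁2 : (a₁ : Matrix (Fin 2) (Fin 2) ℂ) ≠ -1)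
    (h₂1 : (a₂ : Matrix (Fin 2) (Fin 2) ℂ) ≠ 1)
    (h₂2 : (a₂ : Matrix (Fin 2) (Fin 2) ℂ) ≠ -1)
    (ht₁ : trSL a₁ = t) (ht₂ : trSL a₂ = t) :
    (∃ v : Fin 2 → ℂ, v ≠ 0 ∧
        (∃ μ : ℂ, Matrix.mulVec (a₁ : Matrix (Fin 2) (Fin 2) ℂ) v = μ • v) ∧
        (∃ ν : ℂ, Matrix.mulVec (a₂ : Matrix (Fin 2) (Fin 2) ℂ) v = ν • v)) ↔
      (trSL (a₁ * a₂) = 2 ∨ trSL (a₁ * a₂) = t ^ 2 - 2) :=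
  reducible_iff_trace_general t a₁ a₂ ht₁ ht₂
end

section
/- Let t, t₁₂ ∈ ℂ with t₁₂ ≠ 2 and t₁₂ ≠ t² − 2. Then there exists a pair (a₁, a₂) of elements of SL(2,ℂ), each ≠ ±e and of trace t, with tr(a₁a₂) = t₁₂; moreover, for any two such pairs (a₁, a₂) and (a₁′, a₂′) there exists c ∈ SL(2,ℂ) with c a₁ c⁻¹ = a₁′ and c a₂ c⁻¹ = a₂′. -/
open Matrix
open scoped MatrixGroups

theorem conj_eq_of_conj_eq_conj {G : Type*} [Group G] {g g' a a' : G}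
    (h : g * a * g⁻¹ = g' * a' * g'⁻¹) : g'⁻¹ * g * a * (g'⁻¹ * g)⁻¹ = a' := by
  rw [show g'⁻¹ * g * a * (g'⁻¹ * g)⁻¹ = g'⁻¹ * (g * a * g⁻¹) * g' by group, h]
  group

namespace Matrix

variable {R K n : Type*} [CommRing R] [Field K] [Fintype n] [DecidableEq n]

theorem exists_mulVec_eq_smul_iff_isRoot_charpoly [IsDomain R] (M : Matrix n n R) (μ : R) :
    (∃ v ≠ 0, M *ᵥ v = μ • v) ↔ M.charpoly.IsRoot μ := by
  rw [Polynomial.IsRoot.def, eval_charpoly, ← exists_mulVec_eq_zero_iff]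
  have (v : n → R) : (scalar n μ - M) *ᵥ v = μ • v - M *ᵥ v := by
    ext; simp [sub_mulVec]
  simp only [this, sub_eq_zero, eq_comm]

theorem exists_mulVec_eq_smul_iff_fin_two [IsDomain R] (M : Matrix (Fin 2) (Fin 2) R) (μ : R) :
    (∃ v ≠ 0, M *ᵥ v = μ • v) ↔ μ ^ 2 - M.trace * μ + M.det = 0 := by
  rw [exists_mulVec_eq_smul_iff_isRoot_charpoly, charpoly_fin_two]
  simp

theorem SpecialLinearGroup.exists_coe_eq_smul_of_det_ne_zero [IsAlgClosed K] [Nonempty n]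
    {P : Matrix n n K} (hP : P.det ≠ 0) :
    ∃ (g : SpecialLinearGroup n K) (c : K), (g : Matrix n n K) = c • P := by
  obtain ⟨c, hc⟩ := IsAlgClosed.exists_pow_nat_eq P.det⁻¹ (Fintype.card_pos (α := n))
  exact ⟨⟨c • P, by rw [det_smul, hc, inv_mul_cancel₀ hP]⟩, c, rfl⟩

theorem trace_mul_eq_card_of_eq_one_or_neg_one {S : Type*} [Ring S] {a b : Matrix n n S}
    (hab : a.trace = b.trace) (hb : b = 1 ∨ b = -1) : (a * b).trace = Fintype.card n := by
  rcases hb with rfl | rfl <;> simp_all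

def krylov (A : Matrix (Fin 2) (Fin 2) R) (v : Fin 2 → R) : Matrix (Fin 2) (Fin 2) R :=
  (of ![v, A *ᵥ v])ᵀ

theorem mul_krylov (A : Matrix (Fin 2) (Fin 2) R) (v : Fin 2 → R) :
    A * krylov A v = krylov A v * !![0, -A.det; 1, A.trace] := by
  ext i j
  fin_cases i <;> fin_cases j <;>
    simp [krylov, mul_apply, Fin.sum_univ_two, det_fin_two, trace_fin_two] <;> ring

theorem krylov_mulVec_single_zero (A : Matrix (Fin 2) (Fin 2) R) (v : Fin 2 → R) :
    krylov A v *ᵥ Pi.single 0 1 = v := by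
  simp [krylov]

theorem det_krylov_ne_zero {A : Matrix (Fin 2) (Fin 2) K} {v : Fin 2 → K} (hv : v ≠ 0)
    (h : ∀ μ : K, A *ᵥ v ≠ μ • v) : (krylov A v).det ≠ 0 := by
  rw [krylov, det_transpose, ← isUnit_iff_ne_zero, ← isUnit_iff_isUnit_det,
    ← linearIndependent_rows_iff_isUnit]
  exact (LinearIndependent.pair_iff' hv).2 fun μ hμ => h μ hμ.symm

theorem trace_mul_eq_two_or_of_mulVec_eq_smul [IsDomain R] {a b : Matrix (Fin 2) (Fin 2) R}
    {v : Fin 2 → R} {μ l t : R} (hv : v ≠ 0) (ha : a *ᵥ v = μ • v) (hb : b *ᵥ v = l • v)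
    (hda : a.det = 1) (hdb : b.det = 1) (hta : a.trace = t) (htb : b.trace = t) :
    (a * b).trace = 2 ∨ (a * b).trace = t ^ 2 - 2 := by
  have hab : (a * b) *ᵥ v = (μ * l) • v := by
    rw [← mulVec_mulVec, hb, mulVec_smul, ha, smul_smul, mul_comm]
  have eμ := (exists_mulVec_eq_smul_iff_fin_two a μ).1 ⟨v, hv, ha⟩
  have el := (exists_mulVec_eq_smul_iff_fin_two b l).1 ⟨v, hv, hb⟩
  have eμl := (exists_mulVec_eq_smul_iff_fin_two (a * b) (μ * l)).1 ⟨v, hv, hab⟩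
  rw [hda, hta] at eμ
  rw [hdb, htb] at el
  rw [det_mul, hda, hdb] at eμl
  set s := (a * b).trace
  -- `μ` is a root of `X ^ 2 - t X + 1`, whose roots are `l` and `l⁻¹`
  have key : (μ - l) * (μ * l - 1) = 0 := by linear_combination l * eμ - μ * el
  rcases mul_eq_zero.1 key with h | h
  · right
    obtain rfl : μ = l := sub_eq_zero.1 h
    have hμ : μ ^ 2 ≠ 0 := by rintro h0; simp_all
    have : μ ^ 2 * (s - (t ^ 2 - 2)) = 0 := by
      linear_combination -eμl + (μ ^ 2 + 1 + t * μ) * el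
    exact sub_eq_zero.1 ((mul_eq_zero.1 this).resolve_left hμ)
  · left
    linear_combination -eμl + (μ * l + 1 - s) * h

end Matrix

open Polynomial in
theorem exists_units_add_inv_eq {K : Type*} [Field K] [IsAlgClosed K] (t : K) :
    ∃ l : Kˣ, (l : K) + ↑l⁻¹ = t := by
  obtain ⟨l, hl⟩ := IsAlgClosed.exists_root (X ^ 2 - C t * X + 1 : K[X]) (by
    rw [show (X ^ 2 - C t * X + 1 : K[X]).degree = 2 by compute_degree!]; decide)
  simp only [IsRoot.def, eval_add, eval_sub, eval_pow, eval_mul, eval_X, eval_C, eval_one] at hl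
  have hl0 : l ≠ 0 := by rintro rfl; simp at hl
  refine ⟨Units.mk0 l hl0, ?_⟩
  simp only [Units.val_inv_eq_inv_val, Units.val_mk0]
  field_simp
  linear_combination hl

namespace Matrix.SpecialLinearGroup

theorem trace_conj {n R : Type*} [Fintype n] [DecidableEq n] [CommRing R]
    (g a : SpecialLinearGroup n R) :
    ((g * a * g⁻¹ : SpecialLinearGroup n R) : Matrix n n R).trace = (a : Matrix n n R).trace := by
  rw [coe_mul, coe_mul, trace_mul_cycle, ← coe_mul, ← coe_mul, inv_mul_cancel, one_mul]

variable {R K : Type*} [CommRing R] [Field K]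

def companion (t : R) : SL(2, R) :=
  ⟨!![0, -1; 1, t], by simp [det_fin_two_of]⟩

def upperTriangular (l : Rˣ) (x : R) : SL(2, R) :=
  ⟨!![(l : R), x; 0, ↑l⁻¹], by simp [det_fin_two_of]⟩

theorem trace_companion_mul (t : R) (b : SL(2, R)) :
    ((companion t * b : SL(2, R)) : Matrix (Fin 2) (Fin 2) R).trace =
      b 0 1 - b 1 0 + t * b 1 1 := by
  rw [coe_mul, trace_fin_two]
  simp [companion, mul_apply, Fin.sum_univ_two]
  ring

theorem eq_upperTriangular {b : SL(2, R)} {l : Rˣ} {t s : R}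
    (hb : (b : Matrix (Fin 2) (Fin 2) R) *ᵥ Pi.single 0 1 = (l : R) • Pi.single 0 1)
    (hs : ((companion t * b : SL(2, R)) : Matrix (Fin 2) (Fin 2) R).trace = s) :
    b = upperTriangular l (s - t * ↑l⁻¹) := by
  have h00 : b 0 0 = l := by simpa using congrFun hb 0
  have h10 : b 1 0 = 0 := by simpa using congrFun hb 1
  have h11 : b 1 1 = ↑l⁻¹ := by
    have := b.det_coe
    rw [det_fin_two, h00, h10, mul_zero, sub_zero] at this
    exact (Units.inv_eq_of_mul_eq_one_right this).symm
  rw [trace_companion_mul, h10, h11] at hs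
  ext i j
  fin_cases i <;> fin_cases j <;> simp [upperTriangular, h00, h10, h11, ← hs]

theorem exists_conj_eq_companion_and_upperTriangular [IsAlgClosed K] {a₁ a₂ : SL(2, K)}
    {l : Kˣ} {t s : K} (hl : (l : K) + ↑l⁻¹ = t)
    (ha₁ : (a₁ : Matrix (Fin 2) (Fin 2) K).trace = t)
    (ha₂ : (a₂ : Matrix (Fin 2) (Fin 2) K).trace = t)
    (hs : ((a₁ * a₂ : SL(2, K)) : Matrix (Fin 2) (Fin 2) K).trace = s) (hs2 : s ≠ 2)
    (hst : s ≠ t ^ 2 - 2) :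
    ∃ g : SL(2, K),
      g * a₁ * g⁻¹ = companion t ∧ g * a₂ * g⁻¹ = upperTriangular l (s - t * ↑l⁻¹) := by
  obtain ⟨v, hv0, hv⟩ : ∃ v ≠ 0, (a₂ : Matrix (Fin 2) (Fin 2) K) *ᵥ v = (l : K) • v := by
    rw [exists_mulVec_eq_smul_iff_fin_two, ha₂, det_coe, ← hl]
    linear_combination -(Units.inv_mul l)
  have hP : (krylov (a₁ : Matrix (Fin 2) (Fin 2) K) v).det ≠ 0 := by
    refine det_krylov_ne_zero hv0 fun μ hμ => ?_
    rcases trace_mul_eq_two_or_of_mulVec_eq_smul hv0 hμ hv a₁.det_coe a₂.det_coe ha₁ ha₂ with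
      h | h
    exacts [hs2 (hs ▸ h), hst (hs ▸ h)]
  obtain ⟨g, c, hg⟩ := exists_coe_eq_smul_of_det_ne_zero hP
  have h₁ : a₁ * g = g * companion t := by
    ext1
    rw [coe_mul, coe_mul, hg, Matrix.mul_smul, smul_mul, mul_krylov, det_coe, ha₁]
    rfl
  have h₁' : g⁻¹ * a₁ * g = companion t := by rw [mul_assoc, h₁, inv_mul_cancel_left]
  refine ⟨g⁻¹, by rwa [inv_inv], ?_⟩
  rw [inv_inv]
  apply eq_upperTriangular
  · set e₀ : Fin 2 → K := Pi.single 0 1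
    have hge : (g : Matrix (Fin 2) (Fin 2) K) *ᵥ e₀ = c • v := by
      rw [hg, smul_mulVec, krylov_mulVec_single_zero]
    calc ((g⁻¹ * a₂ * g : SL(2, K)) : Matrix (Fin 2) (Fin 2) K) *ᵥ e₀
        = ((g⁻¹ : SL(2, K)) : Matrix (Fin 2) (Fin 2) K) *ᵥ
            ((a₂ : Matrix (Fin 2) (Fin 2) K) *ᵥ ((g : Matrix (Fin 2) (Fin 2) K) *ᵥ e₀)) := by
          simp only [coe_mul, mulVec_mulVec, Matrix.mul_assoc]
      _ = ((g⁻¹ : SL(2, K)) : Matrix (Fin 2) (Fin 2) K) *ᵥ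
            ((l : K) • ((g : Matrix (Fin 2) (Fin 2) K) *ᵥ e₀)) := by
          rw [hge, mulVec_smul, hv, smul_comm]
      _ = (l : K) • e₀ := by
          rw [mulVec_smul, mulVec_mulVec, ← coe_mul, inv_mul_cancel, coe_one, one_mulVec]
  · rw [← h₁', show g⁻¹ * a₁ * g * (g⁻¹ * a₂ * g) = g⁻¹ * (a₁ * a₂) * g⁻¹⁻¹ by group,
      trace_conj, hs]

end Matrix.SpecialLinearGroup

open Matrix.SpecialLinearGroup

/-- Lemma 2.3(ii-1): given `t₁₂ ∈ B_t`, there exists a pair `(a₁, a₂) ∈ G(t)²` with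
`tr(a₁a₂) = t₁₂`, and any two such pairs are conjugate by a single element of SL(2,ℂ). -/
theorem pair_exists_and_unique_up_to_conjugacy
    (t t₁₂ : ℂ) (h2 : t₁₂ ≠ 2) (ht : t₁₂ ≠ t ^ 2 - 2) :
    (∃ a₁ a₂ : Matrix.SpecialLinearGroup (Fin 2) ℂ,
        (a₁ : Matrix (Fin 2) (Fin 2) ℂ) ≠ 1 ∧ (a₁ : Matrix (Fin 2) (Fin 2) ℂ) ≠ -1 ∧
        (a₂ : Matrix (Fin 2) (Fin 2) ℂ) ≠ 1 ∧ (a₂ : Matrix (Fin 2) (Fin 2) ℂ) ≠ -1 ∧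
        trSL a₁ = t ∧ trSL a₂ = t ∧ trSL (a₁ * a₂) = t₁₂) ∧
    (∀ a₁ a₂ a₁' a₂' : Matrix.SpecialLinearGroup (Fin 2) ℂ,
        (a₁ : Matrix (Fin 2) (Fin 2) ℂ) ≠ 1 → (a₁ : Matrix (Fin 2) (Fin 2) ℂ) ≠ -1 →
        (a₂ : Matrix (Fin 2) (Fin 2) ℂ) ≠ 1 → (a₂ : Matrix (Fin 2) (Fin 2) ℂ) ≠ -1 →
        (a₁' : Matrix (Fin 2) (Fin 2) ℂ) ≠ 1 → (a₁' : Matrix (Fin 2) (Fin 2) ℂ) ≠ -1 →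
        (a₂' : Matrix (Fin 2) (Fin 2) ℂ) ≠ 1 → (a₂' : Matrix (Fin 2) (Fin 2) ℂ) ≠ -1 →
        trSL a₁ = t → trSL a₂ = t → trSL (a₁ * a₂) = t₁₂ →
        trSL a₁' = t → trSL a₂' = t → trSL (a₁' * a₂') = t₁₂ →
        ∃ c : Matrix.SpecialLinearGroup (Fin 2) ℂ,
          c * a₁ * c⁻¹ = a₁' ∧ c * a₂ * c⁻¹ = a₂') := by
  obtain ⟨l, hl⟩ := exists_units_add_inv_eq t
  set b := upperTriangular l (t₁₂ - t * ↑l⁻¹)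
  have htC : trSL (companion t) = t := by simp [trSL, companion, trace_fin_two]
  have htb : trSL b = t := by simpa [trSL, b, upperTriangular, trace_fin_two] using hl
  have htCb : trSL (companion t * b) = t₁₂ := by
    rw [trSL, trace_companion_mul]
    simp [b, upperTriangular]
  have ne_pm_one (x y : SL(2, ℂ)) (hxy : trSL x = trSL y) (hxy' : trSL (x * y) = t₁₂) :
      (y : Matrix (Fin 2) (Fin 2) ℂ) ≠ 1 ∧ (y : Matrix (Fin 2) (Fin 2) ℂ) ≠ -1 := by
    constructor <;> intro h <;> apply h2 <;>
      rw [← hxy', trSL, coe_mul, trace_mul_eq_card_of_eq_one_or_neg_one hxy (by tauto)] <;> simp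
  have htbC : trSL (b * companion t) = t₁₂ := by
    rw [← htCb, trSL, trSL, coe_mul, coe_mul, trace_mul_comm]
  obtain ⟨hC1, hCm1⟩ := ne_pm_one b (companion t) (htb.trans htC.symm) htbC
  obtain ⟨hb1, hbm1⟩ := ne_pm_one (companion t) b (htC.trans htb.symm) htCb
  refine ⟨⟨companion t, b, hC1, hCm1, hb1, hbm1, htC, htb, htCb⟩, ?_⟩
  intro a₁ a₂ a₁' a₂' _ _ _ _ _ _ _ _ h₁ h₂ h₁₂ h₁' h₂' h₁₂'
  obtain ⟨g, hg₁, hg₂⟩ := exists_conj_eq_companion_and_upperTriangular hl h₁ h₂ h₁₂ h2 ht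
  obtain ⟨g', hg₁', hg₂'⟩ := exists_conj_eq_companion_and_upperTriangular hl h₁' h₂' h₁₂' h2 ht
  exact ⟨g'⁻¹ * g, conj_eq_of_conj_eq_conj (hg₁.trans hg₁'.symm),
    conj_eq_of_conj_eq_conj (hg₂.trans hg₂'.symm)⟩
end

section
/- Let a, b ∈ SL(2,ℂ) with tr(a) = tr(b) and tr(ab) = 1. Then for every integer k, a·b·a^k·b·a = −b^(k−2); in particular (the case k = 0), a·b²·a = −b^(−2). -/
open scoped MatrixGroups

section Braid

variable {G : Type*} [Group G] {a b : G}

theorem mul_mul_eq_mul_mul_of_pow_three_eq_sq (h : (a * b) ^ 3 = (a * b * a) ^ 2) :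
    a * b * a = b * a * b := by
  refine (mul_left_cancel (a := a * b * a) ?_).symm
  calc a * b * a * (b * a * b) = (a * b) ^ 3 := by rw [pow_three]; group
    _ = (a * b * a) ^ 2 := h
    _ = a * b * a * (a * b * a) := sq _

theorem mul_mul_zpow_mul_mul_of_braid (hbraid : a * b * a = b * a * b) (k : ℤ) :
    a * b * a ^ k * b * a = (a * b) ^ 3 * b ^ (k - 2) := by
  have hconj : SemiconjBy (b * a * b) b a :=
    calc b * a * b * b = a * b * a * b := by rw [hbraid]
      _ = a * (b * a * b) := by group
  calc a * b * a ^ k * b * a = a * b * (a ^ k * (b * a * b)) * b⁻¹ := by group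
    _ = a * b * (b * a * b * b ^ k) * b⁻¹ := by rw [(hconj.zpow_right k).eq]
    _ = a * b * (a * b * a * b ^ k) * b⁻¹ := by rw [hbraid]
    _ = (a * b) ^ 3 * b ^ (k - 2) := by rw [pow_three]; group

end Braid

theorem Matrix.sq_eq_trace_smul_sub_det_smul_one {R : Type*} [CommRing R]
    (M : Matrix (Fin 2) (Fin 2) R) : M ^ 2 = M.trace • M - M.det • 1 := by
  ext i j
  fin_cases i <;> fin_cases j <;>
    simp [sq, Matrix.mul_apply, Matrix.trace_fin_two, Matrix.det_fin_two] <;> ring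

theorem coe_sq_eq_trSL_smul_sub_one (g : SL(2, ℂ)) :
    ((g ^ 2 : SL(2, ℂ)) : Matrix (Fin 2) (Fin 2) ℂ) =
      trSL g • (g : Matrix (Fin 2) (Fin 2) ℂ) - 1 := by
  rw [Matrix.SpecialLinearGroup.coe_pow, Matrix.sq_eq_trace_smul_sub_det_smul_one, g.det_coe,
    one_smul, trSL]

theorem pow_three_eq_neg_one_of_trSL_eq_one {g : SL(2, ℂ)} (h : trSL g = 1) : g ^ 3 = -1 := by
  ext1
  rw [pow_succ, Matrix.SpecialLinearGroup.coe_mul, coe_sq_eq_trSL_smul_sub_one, h, one_smul,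
    sub_mul, ← sq, ← Matrix.SpecialLinearGroup.coe_pow, coe_sq_eq_trSL_smul_sub_one, h,
    one_smul, one_mul, sub_sub_cancel_left, Matrix.SpecialLinearGroup.coe_neg,
    Matrix.SpecialLinearGroup.coe_one]

theorem sq_eq_neg_one_of_trSL_eq_zero {g : SL(2, ℂ)} (h : trSL g = 0) : g ^ 2 = -1 := by
  ext1
  rw [coe_sq_eq_trSL_smul_sub_one, h, zero_smul, zero_sub, Matrix.SpecialLinearGroup.coe_neg,
    Matrix.SpecialLinearGroup.coe_one]

theorem trSL_mul_mul_self (a b : SL(2, ℂ)) :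
    trSL (a * b * a) = trSL a * trSL (a * b) - trSL b := by
  simp only [trSL, Matrix.SpecialLinearGroup.coe_mul]
  rw [Matrix.trace_mul_cycle, ← sq, ← Matrix.SpecialLinearGroup.coe_pow,
    coe_sq_eq_trSL_smul_sub_one, sub_mul, Matrix.smul_mul, one_mul, Matrix.trace_sub,
    Matrix.trace_smul, smul_eq_mul, trSL]

/-- Lemma 4.1: if `a, b ∈ SL(2,ℂ)` have equal traces and `tr(ab) = 1`, then
`a b a^k b a = -b^(k-2)` for every `k ∈ ℤ`; in particular `a b² a = -b⁻²`. -/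
theorem aba_pow_formula
    (a b : Matrix.SpecialLinearGroup (Fin 2) ℂ)
    (htr : trSL a = trSL b) (hab : trSL (a * b) = 1) :
    (∀ k : ℤ,
      ((a * b * a ^ k * b * a : Matrix.SpecialLinearGroup (Fin 2) ℂ) :
          Matrix (Fin 2) (Fin 2) ℂ) =
        -((b ^ (k - 2) : Matrix.SpecialLinearGroup (Fin 2) ℂ) :
            Matrix (Fin 2) (Fin 2) ℂ)) ∧
    ((a * b ^ 2 * a : Matrix.SpecialLinearGroup (Fin 2) ℂ) :
        Matrix (Fin 2) (Fin 2) ℂ) =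
      -((b ^ (-2 : ℤ) : Matrix.SpecialLinearGroup (Fin 2) ℂ) :
          Matrix (Fin 2) (Fin 2) ℂ) := by
  have hcube : (a * b) ^ 3 = -1 := pow_three_eq_neg_one_of_trSL_eq_one hab
  have hsq : (a * b * a) ^ 2 = -1 :=
    sq_eq_neg_one_of_trSL_eq_zero (by rw [trSL_mul_mul_self, hab, htr]; ring)
  have hbraid := mul_mul_eq_mul_mul_of_pow_three_eq_sq (hcube.trans hsq.symm)
  have key (k : ℤ) : a * b * a ^ k * b * a = -b ^ (k - 2) := by
    rw [mul_mul_zpow_mul_mul_of_braid hbraid, hcube, neg_one_mul]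
  refine ⟨fun k => by rw [key, Matrix.SpecialLinearGroup.coe_neg], ?_⟩
  have hk0 : a * b ^ 2 * a = a * b * a ^ (0 : ℤ) * b * a := by
    rw [zpow_zero, mul_one, sq, mul_assoc a b b]
  rw [hk0, key, Matrix.SpecialLinearGroup.coe_neg, zero_sub]
end

section
/- Let t ∈ ℂ and let x₁, x₃, x₄ ∈ SL(2,ℂ), each ≠ ±e and of trace t, with tr(x₁x₄) = 0 and tr(x₃x₄) = 1. Then: (a) if x₁ = x₃⁻¹, then t² = 1 and tr(x₁x₃) = 2; (b) conversely, if t² = 1, tr(x₁x₃) = 2, and tr(x₁x₃x₄) = t, then x₁ = x₃⁻¹. -/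
private lemma key_scalar (a b c d e f g h t m1 m2 m3 m4 : ℂ)
    (H1 : a*d - b*c = 1) (H2 : e*h - f*g = 1)
    (H3 : a + d = t) (H4 : e + h = t) (H5 : t^2 = 1)
    (H6 : a*e + b*g + c*f + d*h = 1)
    (K2 : m1 + m4 = t)
    (K3 : m1*e + m2*g + m3*f + m4*h = 0)
    (K4 : m1*a + m2*c + (m3*b + m4*d) = 2)
    (K5 : a*e*m1 + a*f*m3 + b*g*m1 + b*h*m3 + c*e*m2 + c*f*m4 + d*g*m2 + d*h*m4 = t) :
    m1 = d ∧ m2 = -b ∧ m3 = -c ∧ m4 = a := by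
  have L0 : a*m1 + b*m3 + c*m2 + d*m4 - 2 = 0 := by linear_combination K4
  have L1 : a*e*m1 + a*f*m3 + b*g*m1 + b*h*m3 + c*e*m2 + c*f*m4 + d*g*m2 + d*h*m4 - e - h = 0 := by linear_combination K5 - H4
  have L2 : a*d*m1 + a*d*m4 - a - b*c*m1 - b*c*m4 - d = 0 := by linear_combination (m1 + m4) * H1 + K2 - H3
  have L3 : a*d*e*m1 + a*d*f*m3 + a*d*g*m2 + a*d*h*m4 - a*h - b*c*e*m1 - b*c*f*m3 - b*c*g*m2 - b*c*h*m4 + b*g + c*f - d*e = 0 := by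
    linear_combination (m1*e + m2*g + m3*f + m4*h) * H1 + K3 - (e+h)*H3 - t*H4 + H6 - H5
  have hD : a^2*f*g - a*b*e*g + a*b*g*h - a*c*e*f + a*c*f*h - 2*a*d*f*g - b^2*g^2 + b*c*e^2 - 2*b*c*e*h + 2*b*c*f*g + b*c*h^2 + b*d*e*g - b*d*g*h - c^2*f^2 + c*d*e*f - c*d*f*h + d^2*f*g = 2 := by
    linear_combination (3:ℂ)*H1 + (2*a*e*h - 3*a*f*g - a*h*t - 3*a + b*e*g + c*e*f + d*f*g - e*h*t + f*g*t + (1/2)*h*t^2 + (1/2)*h)*H3 + (2*a^2*e + a^2*t + a*b*g + a*c*f - a*e*t - (3/2)*a*t^2 - (1/2)*a + b*c*e + b*c*h + b*c*t + (1/2)*t^3 + (1/2)*t)*H4 + (-2*a*e + a*t - b*g - c*f + e*t - (1/2)*t^2 - (1/2))*H6 + (-4*a^2 + 4*a*t - 4*b*c - t^2)*H2 + (a^2 + a*e - (3/2)*a*t + b*c + (1/2)*b*g + (1/2)*c*f - (1/2)*e*t + (1/2)*t^2 - (1/2))*H5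
  have hn1 : a*m1 + c*m2 - 1 = 0 := by
    linear_combination ((a^2*f*g + a*b*g*h - a*c*e*f + a*c*f*h - a*d*f*g - b*c*e*h + b*c*f*g + b*c*h^2 - c^2*f^2 - c*d*f*h)/2)*L0 + ((-a*b*g + b*c*e - b*c*h + c*d*f)/2)*L1 + ((-a*f*g - b*g*h + c*e*f + d*f*g)/2)*L2 + ((b*g - c*f)/2)*L3 - ((a*m1 + c*m2 - 1)/2)*hD
  have hn2 : b*m1 + d*m2 = 0 := by
    linear_combination ((a*b*f*g + a*d*f*h + b^2*g*h - b*c*e*f - b*d*e*h + b*d*h^2 - c*d*f^2 - d^2*f*h)/2)*L0 + ((-a*d*f - b^2*g + b*c*f + b*d*e - b*d*h + d^2*f)/2)*L1 + ((-a*f*h + b*e*h - b*f*g - b*h^2 + c*f^2 + d*f*h)/2)*L2 + ((a*f - b*e + b*h - d*f)/2)*L3 - ((b*m1 + d*m2)/2)*hD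
  have hn3 : a*m3 + c*m4 = 0 := by
    linear_combination ((-a^2*e*g - a*b*g^2 + a*c*e^2 - a*c*e*h + a*d*e*g - b*c*g*h + c^2*e*f + c*d*f*g)/2)*L0 + ((a^2*g - a*c*e + a*c*h - a*d*g + b*c*g - c^2*f)/2)*L1 + ((a*e*g + b*g^2 - c*e^2 + c*e*h - c*f*g - d*e*g)/2)*L2 + ((-a*g + c*e - c*h + d*g)/2)*L3 - ((a*m3 + c*m4)/2)*hD
  have hn4 : b*m3 + d*m4 - 1 = 0 := by
    linear_combination ((-a*b*e*g - a*d*f*g - b^2*g^2 + b*c*e^2 - b*c*e*h + b*c*f*g + b*d*e*g - b*d*g*h + c*d*e*f + d^2*f*g)/2)*L0 + ((a*b*g - b*c*e + b*c*h - c*d*f)/2)*L1 + ((a*f*g + b*g*h - c*e*f - d*f*g)/2)*L2 + ((-b*g + c*f)/2)*L3 - ((b*m3 + d*m4 - 1)/2)*hD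
  refine ⟨?_, ?_, ?_, ?_⟩
  · linear_combination d*hn1 - c*hn2 - m1*H1
  · linear_combination a*hn2 - b*hn1 - m2*H1
  · linear_combination d*hn3 - c*hn4 - m3*H1
  · linear_combination a*hn4 - b*hn3 - m4*H1

open Matrix SpecialLinearGroup in
/-- The dichotomy in the proof of Claim 4.2: with `x₁, x₃, x₄ ∈ G(t)`,
`tr(x₁x₄) = 0`, `tr(x₃x₄) = 1`, one has (a) `x₁ = x₃⁻¹` implies `t² = 1` and
`tr(x₁x₃) = 2`; (b) conversely, `t² = 1`, `tr(x₁x₃) = 2` and `tr(x₁x₃x₄) = t`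
imply `x₁ = x₃⁻¹`. -/
theorem pretzel_dichotomy
    (t : ℂ) (x₁ x₃ x₄ : Matrix.SpecialLinearGroup (Fin 2) ℂ)
    (h₁1 : (x₁ : Matrix (Fin 2) (Fin 2) ℂ) ≠ 1) (h₁2 : (x₁ : Matrix (Fin 2) (Fin 2) ℂ) ≠ -1)
    (h₃1 : (x₃ : Matrix (Fin 2) (Fin 2) ℂ) ≠ 1) (h₃2 : (x₃ : Matrix (Fin 2) (Fin 2) ℂ) ≠ -1)
    (h₄1 : (x₄ : Matrix (Fin 2) (Fin 2) ℂ) ≠ 1) (h₄2 : (x₄ : Matrix (Fin 2) (Fin 2) ℂ) ≠ -1)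
    (ht₁ : trSL x₁ = t) (ht₃ : trSL x₃ = t) (ht₄ : trSL x₄ = t)
    (c₁₄ : trSL (x₁ * x₄) = 0) (c₃₄ : trSL (x₃ * x₄) = 1) :
    (x₁ = x₃⁻¹ → t ^ 2 = 1 ∧ trSL (x₁ * x₃) = 2) ∧
    (t ^ 2 = 1 → trSL (x₁ * x₃) = 2 → trSL (x₁ * x₃ * x₄) = t → x₁ = x₃⁻¹) := by
  have detA := x₃.prop
  have detB := x₄.prop
  rw [Matrix.det_fin_two] at detA detB
  simp only [trSL, Matrix.SpecialLinearGroup.coe_mul, Matrix.trace_fin_two,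
    Matrix.mul_apply, Fin.sum_univ_two] at ht₁ ht₃ ht₄ c₁₄ c₃₄
  constructor
  · rintro rfl
    simp only [Matrix.SpecialLinearGroup.coe_inv, Matrix.adjugate_fin_two,
      Matrix.cons_val', Matrix.cons_val_zero, Matrix.cons_val_one, Matrix.head_cons,
      Matrix.empty_val', Matrix.cons_val_fin_one, Matrix.head_fin_const,
      Matrix.of_apply] at c₁₄
    constructor
    · linear_combination
        (-(((x₄ : Matrix (Fin 2) (Fin 2) ℂ) 0 0) + ((x₄ : Matrix (Fin 2) (Fin 2) ℂ) 1 1))) * ht₃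
        - t * ht₄ + c₃₄ + c₁₄
    · show Matrix.trace ((x₃⁻¹ * x₃ : Matrix.SpecialLinearGroup (Fin 2) ℂ) : Matrix (Fin 2) (Fin 2) ℂ) = 2
      rw [inv_mul_cancel]
      simp [Matrix.trace_one]
  · intro h5 h13 h134
    simp only [trSL, Matrix.SpecialLinearGroup.coe_mul, Matrix.trace_fin_two,
      Matrix.mul_apply, Fin.sum_univ_two] at h13 h134
    obtain ⟨e1, e2, e3, e4⟩ := key_scalar
      ((x₃ : Matrix (Fin 2) (Fin 2) ℂ) 0 0) ((x₃ : Matrix (Fin 2) (Fin 2) ℂ) 0 1)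
      ((x₃ : Matrix (Fin 2) (Fin 2) ℂ) 1 0) ((x₃ : Matrix (Fin 2) (Fin 2) ℂ) 1 1)
      ((x₄ : Matrix (Fin 2) (Fin 2) ℂ) 0 0) ((x₄ : Matrix (Fin 2) (Fin 2) ℂ) 0 1)
      ((x₄ : Matrix (Fin 2) (Fin 2) ℂ) 1 0) ((x₄ : Matrix (Fin 2) (Fin 2) ℂ) 1 1)
      t
      ((x₁ : Matrix (Fin 2) (Fin 2) ℂ) 0 0) ((x₁ : Matrix (Fin 2) (Fin 2) ℂ) 0 1)
      ((x₁ : Matrix (Fin 2) (Fin 2) ℂ) 1 0) ((x₁ : Matrix (Fin 2) (Fin 2) ℂ) 1 1)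
      (by linear_combination detA) (by linear_combination detB)
      (by linear_combination ht₃) (by linear_combination ht₄) h5
      (by linear_combination c₃₄) (by linear_combination ht₁)
      (by linear_combination c₁₄) (by linear_combination h13) (by linear_combination h134)
    have hmul : x₁ * x₃ = 1 := by
      apply Matrix.SpecialLinearGroup.ext
      intro i j
      fin_cases i <;> fin_cases j <;>
        simp only [Matrix.SpecialLinearGroup.coe_mul, Matrix.mul_apply, Fin.sum_univ_two,
          Matrix.SpecialLinearGroup.coe_one, Matrix.one_apply, Fin.mk_zero, Fin.mk_one] <;>
        norm_num
      · linear_combination ((x₃ : Matrix (Fin 2) (Fin 2) ℂ) 0 0) * e1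
          + ((x₃ : Matrix (Fin 2) (Fin 2) ℂ) 1 0) * e2 + detA
      · linear_combination ((x₃ : Matrix (Fin 2) (Fin 2) ℂ) 0 1) * e1
          + ((x₃ : Matrix (Fin 2) (Fin 2) ℂ) 1 1) * e2
      · linear_combination ((x₃ : Matrix (Fin 2) (Fin 2) ℂ) 0 0) * e3
          + ((x₃ : Matrix (Fin 2) (Fin 2) ℂ) 1 0) * e4
      · linear_combination ((x₃ : Matrix (Fin 2) (Fin 2) ℂ) 0 1) * e3
          + ((x₃ : Matrix (Fin 2) (Fin 2) ℂ) 1 1) * e4 + detA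
    exact mul_eq_one_iff_eq_inv.mp hmul
end

section
/- Let κ ∈ ℂ with κ ≠ 0, κ ≠ 1, κ ≠ −1, set t = κ + κ⁻¹, and let ε ∈ {1, −1}. Let a = [[κ, 0], [0, κ⁻¹]] and b = [[κ^ε, 1], [0, κ^(−ε)]], viewed as elements of SL(2,ℂ). Let a₂, a₃ ∈ ℂ with a₂ ≠ 2 and a₂ ≠ t² − 2. If a₃ ≠ ε·a₂ + (1−ε)·t²/2, then there exists a unique x ∈ SL(2,ℂ) with tr(x) = t, tr(ax) = a₂, and tr(bx) = a₃; if a₃ = ε·a₂ + (1−ε)·t²/2, then no such x exists. -/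
lemma trace_fin_two_upperTriangular_mul {R : Type*} [CommRing R] (α β δ : R)
    (y : Matrix (Fin 2) (Fin 2) R) :
    Matrix.trace (!![α, β; 0, δ] * y) = α * y 0 0 + β * y 1 0 + δ * y 1 1 := by
  simp [Matrix.trace_fin_two, Matrix.vecMul, dotProduct, Fin.sum_univ_two]

section Field

variable {K : Type*} [Field K]

lemma add_eq_and_mul_add_mul_eq_iff {κ μ : K} (h : κ - μ ≠ 0) (t a p s : K) :
    (p + s = t ∧ κ * p + μ * s = a) ↔
      (p = (a - μ * t) / (κ - μ) ∧ s = (κ * t - a) / (κ - μ)) := by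
  rw [eq_div_iff h, eq_div_iff h]
  constructor
  · rintro ⟨hsum, hlin⟩
    exact ⟨by linear_combination hlin - μ * hsum, by linear_combination κ * hsum - hlin⟩
  · rintro ⟨hp, hs⟩
    refine ⟨mul_right_cancel₀ h ?_, mul_right_cancel₀ h ?_⟩
    · linear_combination hp + hs
    · linear_combination κ * hp + μ * hs

lemma sub_inv_ne_zero {κ : K} (h0 : κ ≠ 0) (h1 : κ ≠ 1) (h2 : κ ≠ -1) : κ - κ⁻¹ ≠ 0 := by
  intro h
  have hsq : (κ - 1) * (κ + 1) = 0 := by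
    field_simp at h
    linear_combination h
  rcases mul_eq_zero.mp hsq with h' | h'
  · exact h1 (sub_eq_zero.mp h')
  · exact h2 (eq_neg_of_add_eq_zero_left h')

lemma zpow_mul_add_zpow_neg_mul_eq [NeZero (2 : K)] {κ p s a : K} {ε : ℤ} (hε : ε = 1 ∨ ε = -1)
    (hsum : p + s = κ + κ⁻¹) (hlin : κ * p + κ⁻¹ * s = a) :
    κ ^ ε * p + κ ^ (-ε) * s = ε * a + (1 - ε) * (κ + κ⁻¹) ^ 2 / 2 := by
  rcases hε with rfl | rfl
  · simpa using hlin
  · rw [show (1 - ((-1 : ℤ) : K)) = 2 by push_cast; ring, mul_div_cancel_left₀ _ two_ne_zero]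
    simp only [neg_neg, zpow_neg, zpow_one, Int.cast_neg, Int.cast_one]
    linear_combination (κ + κ⁻¹) * hsum - hlin

lemma mul_sub_one_mul_sub_inv_sq {κ p s : K} (h0 : κ ≠ 0) (hsum : p + s = κ + κ⁻¹) :
    (p * s - 1) * (κ - κ⁻¹) ^ 2 =
      -((κ * p + κ⁻¹ * s - 2) * (κ * p + κ⁻¹ * s - ((κ + κ⁻¹) ^ 2 - 2))) := by
  obtain rfl : s = κ + κ⁻¹ - p := by linear_combination hsum
  field_simp
  ring

end Field

namespace Matrix.SpecialLinearGroup

variable {K : Type*} [Field K]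

lemma existsUnique_of_apply_one_zero_ne_zero {p s r : K} (hr : r ≠ 0) :
    ∃! y : SpecialLinearGroup (Fin 2) K, y 0 0 = p ∧ y 1 1 = s ∧ y 1 0 = r := by
  have hdet : Matrix.det !![p, (p * s - 1) / r; r, s] = 1 := by
    rw [Matrix.det_fin_two_of, div_mul_cancel₀ _ hr]
    ring
  refine ⟨⟨_, hdet⟩, by simp, ?_⟩
  rintro y ⟨hp, hs, hr'⟩
  have hy := y.prop
  rw [Matrix.det_fin_two, hp, hs, hr'] at hy
  have hq : y 0 1 = (p * s - 1) / r := by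
    rw [eq_div_iff hr]
    linear_combination -hy
  ext i j
  fin_cases i <;> fin_cases j <;> simp [hp, hs, hr', hq]

lemma apply_zero_zero_mul_apply_one_one {y : SpecialLinearGroup (Fin 2) K} (h : y 1 0 = 0) :
    y 0 0 * y 1 1 = 1 := by
  have hdet := y.prop
  rwa [Matrix.det_fin_two, h, mul_zero, sub_zero] at hdet

end Matrix.SpecialLinearGroup

open Matrix.SpecialLinearGroup in
/-- The key case in the proof of Lemma 3.1: with `a = d(κ)` and `b = u(κ^ε)`
(`κ ≠ 0, ±1`, `t = κ + κ⁻¹`, `ε = ±1`) and `a₂ ∈ B_t`, there is a unique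
`x ∈ SL(2,ℂ)` with `tr(x) = t`, `tr(ax) = a₂`, `tr(bx) = a₃` when
`a₃ ≠ ε a₂ + (1-ε) t²/2`, and no such `x` otherwise. -/
theorem reducible_noncommuting_case
    (κ : ℂ) (h0 : κ ≠ 0) (h1 : κ ≠ 1) (h2 : κ ≠ -1)
    (t : ℂ) (ht : t = κ + κ⁻¹)
    (ε : ℤ) (hε : ε = 1 ∨ ε = -1)
    (a b : Matrix.SpecialLinearGroup (Fin 2) ℂ)
    (ha : (a : Matrix (Fin 2) (Fin 2) ℂ) = !![κ, 0; 0, κ⁻¹])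
    (hb : (b : Matrix (Fin 2) (Fin 2) ℂ) = !![κ ^ ε, 1; 0, κ ^ (-ε)])
    (a₂ a₃ : ℂ) (ha₂ : a₂ ≠ 2) (ha₂' : a₂ ≠ t ^ 2 - 2) :
    (a₃ ≠ (ε : ℂ) * a₂ + (1 - (ε : ℂ)) * t ^ 2 / 2 →
      ∃! x : Matrix.SpecialLinearGroup (Fin 2) ℂ,
        trSL x = t ∧ trSL (a * x) = a₂ ∧ trSL (b * x) = a₃) ∧
    (a₃ = (ε : ℂ) * a₂ + (1 - (ε : ℂ)) * t ^ 2 / 2 →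
      ¬ ∃ x : Matrix.SpecialLinearGroup (Fin 2) ℂ,
        trSL x = t ∧ trSL (a * x) = a₂ ∧ trSL (b * x) = a₃) := by
  subst ht
  have hδ := sub_inv_ne_zero h0 h1 h2
  set p := (a₂ - κ⁻¹ * (κ + κ⁻¹)) / (κ - κ⁻¹)
  set s := (κ * (κ + κ⁻¹) - a₂) / (κ - κ⁻¹)
  set c := (ε : ℂ) * a₂ + (1 - (ε : ℂ)) * (κ + κ⁻¹) ^ 2 / 2
  obtain ⟨hsum, hlin⟩ := (add_eq_and_mul_add_mul_eq_iff hδ _ _ p s).mpr ⟨rfl, rfl⟩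
  have hc : κ ^ ε * p + κ ^ (-ε) * s = c := zpow_mul_add_zpow_neg_mul_eq hε hsum hlin
  have hchar : ∀ y : Matrix.SpecialLinearGroup (Fin 2) ℂ,
      (trSL y = κ + κ⁻¹ ∧ trSL (a * y) = a₂ ∧ trSL (b * y) = a₃) ↔
        (y 0 0 = p ∧ y 1 1 = s ∧ y 1 0 = a₃ - c) := by
    intro y
    have hay := trace_fin_two_upperTriangular_mul κ 0 κ⁻¹ y
    have hby := trace_fin_two_upperTriangular_mul (κ ^ ε) 1 (κ ^ (-ε)) y
    simp only [zero_mul, add_zero, one_mul] at hay hby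
    simp only [trSL, Matrix.SpecialLinearGroup.coe_mul, ha, hb, hay, hby, Matrix.trace_fin_two,
      ← and_assoc, add_eq_and_mul_add_mul_eq_iff hδ]
    refine and_congr_right fun ⟨hp, hs⟩ => ?_
    rw [hp, hs, ← hc, eq_sub_iff_add_eq]
    constructor <;> intro h <;> linear_combination h
  refine ⟨fun hne => ?_, fun heq => ?_⟩
  · simpa only [hchar] using existsUnique_of_apply_one_zero_ne_zero (sub_ne_zero.mpr hne)
  · rintro ⟨y, hy⟩
    obtain ⟨hp, hs, hr⟩ := (hchar y).mp hy
    have hps := apply_zero_zero_mul_apply_one_one (hr.trans (sub_eq_zero.mpr heq))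
    have key := mul_sub_one_mul_sub_inv_sq h0 hsum
    rw [hp, hs] at hps
    rw [hps, sub_self, zero_mul, hlin, zero_eq_neg] at key
    exact mul_ne_zero (sub_ne_zero.mpr ha₂) (sub_ne_zero.mpr ha₂') key
end

section
/- Let x, y, z ∈ SL(2,ℂ) with tr(x) = tr(y) = tr(z), tr(xy) = 1, and tr(xz) = 1. Then x¹² · (x z⁻¹ x⁻¹) · x⁻¹ · z⁻¹ · y⁻¹ · x⁻¹ · (x⁻¹ y⁻¹ x) · (x z⁻¹ x⁻¹) · x⁻¹ · z⁻¹ · y⁻¹ · x⁻¹ · (x⁻¹ y⁻¹ x) = x²⁴. -/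
private lemma inv_coe (a : Matrix.SpecialLinearGroup (Fin 2) ℂ) :
    ((a⁻¹ : Matrix.SpecialLinearGroup (Fin 2) ℂ) : Matrix (Fin 2) (Fin 2) ℂ)
      = trSL a • (1 : Matrix (Fin 2) (Fin 2) ℂ) - (a : Matrix (Fin 2) (Fin 2) ℂ) := by
  rw [Matrix.SpecialLinearGroup.coe_inv, Matrix.adjugate_fin_two]
  ext i j
  fin_cases i <;> fin_cases j <;>
    simp [trSL, Matrix.trace_fin_two, Matrix.one_apply]

/-- Longitude computation for the 12-crossing knot `Q₁`: under the trace
conditions, the product representing `𝔩` equals `x²⁴`. -/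
theorem Q1_longitude
    (x y z : Matrix.SpecialLinearGroup (Fin 2) ℂ)
    (hxy : trSL x = trSL y) (hxz : trSL x = trSL z)
    (cxy : trSL (x * y) = 1) (cxz : trSL (x * z) = 1) :
    x ^ 12 * (x * z⁻¹ * x⁻¹) * x⁻¹ * z⁻¹ * y⁻¹ * x⁻¹ * (x⁻¹ * y⁻¹ * x) *
        (x * z⁻¹ * x⁻¹) * x⁻¹ * z⁻¹ * y⁻¹ * x⁻¹ * (x⁻¹ * y⁻¹ * x) =
      x ^ 24 := by
  set t : ℂ := trSL x with ht
  set X : Matrix (Fin 2) (Fin 2) ℂ := (x : Matrix (Fin 2) (Fin 2) ℂ) with hX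
  -- Cayley–Hamilton for x
  have hX2 : X * X = t • X - 1 := by
    have h := congrArg (fun a : Matrix.SpecialLinearGroup (Fin 2) ℂ =>
      (a : Matrix (Fin 2) (Fin 2) ℂ)) (mul_inv_cancel x)
    simp only [Matrix.SpecialLinearGroup.coe_mul, Matrix.SpecialLinearGroup.coe_one,
      inv_coe, ← ht, ← hX] at h
    rw [mul_sub, mul_smul_comm, mul_one] at h
    rw [← h]; abel
  have key : ∀ w : Matrix.SpecialLinearGroup (Fin 2) ℂ, trSL x = trSL w →
      trSL (x * w) = 1 →
      ((w⁻¹ * x⁻¹ * (x⁻¹ * w⁻¹) : Matrix.SpecialLinearGroup (Fin 2) ℂ) :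
        Matrix (Fin 2) (Fin 2) ℂ) = -(X * X) := by
    intro w hw hc
    set W : Matrix (Fin 2) (Fin 2) ℂ := (w : Matrix (Fin 2) (Fin 2) ℂ) with hWdef
    have hc' : trSL (w * x) = 1 := by
      rw [trSL, Matrix.SpecialLinearGroup.coe_mul, Matrix.trace_mul_comm,
        ← Matrix.SpecialLinearGroup.coe_mul]
      exact hc
    have h1 : ((w⁻¹ * x⁻¹ : Matrix.SpecialLinearGroup (Fin 2) ℂ) :
        Matrix (Fin 2) (Fin 2) ℂ) = 1 - X * W := by
      rw [← mul_inv_rev, inv_coe, hc, one_smul, Matrix.SpecialLinearGroup.coe_mul]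
    have h2 : ((x⁻¹ * w⁻¹ : Matrix.SpecialLinearGroup (Fin 2) ℂ) :
        Matrix (Fin 2) (Fin 2) ℂ) = 1 - W * X := by
      rw [← mul_inv_rev, inv_coe, hc', one_smul, Matrix.SpecialLinearGroup.coe_mul]
    have hW2 : W * W = t • W - 1 := by
      have h := congrArg (fun a : Matrix.SpecialLinearGroup (Fin 2) ℂ =>
        (a : Matrix (Fin 2) (Fin 2) ℂ)) (mul_inv_cancel w)
      simp only [Matrix.SpecialLinearGroup.coe_mul, Matrix.SpecialLinearGroup.coe_one,
        inv_coe, ← hw, ← ht, ← hWdef] at h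
      rw [mul_sub, mul_smul_comm, mul_one] at h
      rw [← h]; abel
    -- the mixed relation, from tr x = tr w
    have h3 : (t • (1 : Matrix (Fin 2) (Fin 2) ℂ) - X) * (t • 1 - W) = 1 - W * X := by
      have h5 : ((x⁻¹ : Matrix.SpecialLinearGroup (Fin 2) ℂ) : Matrix (Fin 2) (Fin 2) ℂ)
          * ((w⁻¹ : Matrix.SpecialLinearGroup (Fin 2) ℂ) : Matrix (Fin 2) (Fin 2) ℂ)
          = 1 - W * X := by
        rw [← Matrix.SpecialLinearGroup.coe_mul, h2]
      rw [inv_coe, inv_coe, ← hw, ← ht] at h5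
      exact h5
    have hWX : W * X = (1 - t * t) • 1 + t • X + t • W - X * W := by
      have h4 : (t • (1 : Matrix (Fin 2) (Fin 2) ℂ) - X) * (t • 1 - W)
          = (t * t) • 1 - t • W - t • X + X * W := by
        simp only [sub_mul, mul_sub, smul_mul_assoc, mul_smul_comm, one_mul, mul_one,
          smul_smul, smul_sub]
        module
      rw [h4] at h3
      have h5 : W * X = 1 - ((t * t) • (1 : Matrix (Fin 2) (Fin 2) ℂ)
          - t • W - t • X + X * W) := by
        rw [h3]; abel
      rw [h5]; module
    have hXWX : X * (W * X) = X + W - t • 1 := by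
      rw [hWX]
      simp only [mul_sub, mul_add, mul_smul_comm, mul_one]
      rw [← mul_assoc, hX2, sub_mul, smul_mul_assoc, one_mul]
      module
    have hWWX : W * (W * X) = t • (W * X) - X := by
      rw [← mul_assoc, hW2, sub_mul, smul_mul_assoc, one_mul]
    rw [Matrix.SpecialLinearGroup.coe_mul, h1, h2, hX2]
    rw [sub_mul, mul_sub, mul_sub, one_mul, mul_one, one_mul, mul_assoc, hWWX,
      mul_sub, mul_smul_comm, hXWX, hX2, hWX]
    module
  have hzkey := key z hxz cxz
  have hykey := key y hxy cxy
  have hC : x * (z⁻¹ * x⁻¹ * (x⁻¹ * z⁻¹)) * (y⁻¹ * x⁻¹ * (x⁻¹ * y⁻¹)) * x = x ^ 6 := by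
    apply Subtype.ext
    simp only [Matrix.SpecialLinearGroup.coe_mul] at hzkey hykey
    simp only [Matrix.SpecialLinearGroup.coe_mul, Matrix.SpecialLinearGroup.coe_pow]
    rw [hzkey, hykey, ← hX]
    noncomm_ring
  calc x ^ 12 * (x * z⁻¹ * x⁻¹) * x⁻¹ * z⁻¹ * y⁻¹ * x⁻¹ * (x⁻¹ * y⁻¹ * x) *
        (x * z⁻¹ * x⁻¹) * x⁻¹ * z⁻¹ * y⁻¹ * x⁻¹ * (x⁻¹ * y⁻¹ * x)
      = x ^ 12 * (x * (z⁻¹ * x⁻¹ * (x⁻¹ * z⁻¹)) * (y⁻¹ * x⁻¹ * (x⁻¹ * y⁻¹)) * x) *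
          (x * (z⁻¹ * x⁻¹ * (x⁻¹ * z⁻¹)) * (y⁻¹ * x⁻¹ * (x⁻¹ * y⁻¹)) * x) := by
        group
    _ = x ^ 12 * x ^ 6 * x ^ 6 := by rw [hC]
    _ = x ^ 24 := by group
end

section
/- Let x, y, z ∈ SL(2,ℂ) with tr(x) = tr(y) = tr(z), tr(xy) = 1, and tr(yz) = 1. Then x⁶ · y⁻¹ · x⁻¹ · y · (z⁻¹ y⁻² z⁻¹) · y · x⁻¹ · y⁻¹ = x¹². -/
open scoped MatrixGroups

namespace Matrix

variable {R : Type*} [CommRing R]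

theorem mul_self_fin_two (A : Matrix (Fin 2) (Fin 2) R) :
    A * A = A.trace • A - A.det • 1 := by
  ext i j
  fin_cases i <;> fin_cases j <;>
    simp [mul_apply, trace_fin_two, det_fin_two] <;> ring

theorem mul_add_mul_comm_fin_two (A B : Matrix (Fin 2) (Fin 2) R) :
    A * B + B * A = A.trace • B + B.trace • A + ((A * B).trace - A.trace * B.trace) • 1 := by
  ext i j
  fin_cases i <;> fin_cases j <;>
    simp [mul_apply, trace_fin_two] <;> ring

theorem mul_mul_eq_add_sub_of_trace_mul_eq_one {A B : Matrix (Fin 2) (Fin 2) R} {t : R}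
    (hA : A.trace = t) (hB : B.trace = t) (hdet : A.det = 1) (hAB : (A * B).trace = 1) :
    A * B * A = A + B - t • 1 := by
  have hsq : A * A = t • A - 1 := by rw [mul_self_fin_two, hA, hdet, one_smul]
  have hBA : B * A = t • B + t • A + (1 - t * t) • 1 - A * B := by
    rw [eq_sub_iff_add_eq, add_comm, mul_add_mul_comm_fin_two, hA, hB, hAB]
  calc A * B * A = A * (B * A) := mul_assoc _ _ _
    _ = t • (A * B) + t • (A * A) + (1 - t * t) • A - A * A * B := by
      rw [hBA]; simp only [mul_add, mul_sub, Matrix.mul_smul, mul_one, mul_assoc]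
    _ = A + B - t • 1 := by
      rw [hsq]; simp only [sub_mul, Matrix.smul_mul, one_mul, smul_sub, smul_smul]; module

end Matrix

namespace Matrix.SpecialLinearGroup

variable {R : Type*} [CommRing R]

theorem sq_eq_neg_one_of_trace_eq_zero {g : SL(2, R)}
    (hg : (g : Matrix (Fin 2) (Fin 2) R).trace = 0) : g ^ 2 = -1 := by
  ext1
  rw [coe_pow, sq, mul_self_fin_two, hg, det_coe]
  simp

section TraceMulEqOne

variable {x y : SL(2, R)}
  (htr : (x : Matrix (Fin 2) (Fin 2) R).trace = (y : Matrix (Fin 2) (Fin 2) R).trace)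
  (hxy : ((x * y : SL(2, R)) : Matrix (Fin 2) (Fin 2) R).trace = 1)
include htr hxy

theorem coe_mul_mul_of_trace_mul_eq_one :
    ((x * y * x : SL(2, R)) : Matrix (Fin 2) (Fin 2) R) =
      x + y - (x : Matrix (Fin 2) (Fin 2) R).trace • 1 :=
  Matrix.mul_mul_eq_add_sub_of_trace_mul_eq_one rfl htr.symm (det_coe x) hxy

theorem mul_mul_eq_mul_mul_of_trace_mul_eq_one : x * y * x = y * x * y := by
  have hyx : ((y * x : SL(2, R)) : Matrix (Fin 2) (Fin 2) R).trace = 1 := by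
    rwa [coe_mul, trace_mul_comm, ← coe_mul]
  ext1
  rw [coe_mul_mul_of_trace_mul_eq_one htr hxy, coe_mul_mul_of_trace_mul_eq_one htr.symm hyx,
    htr, add_comm (x : Matrix (Fin 2) (Fin 2) R)]

theorem mul_mul_sq_eq_neg_one_of_trace_mul_eq_one : (x * y * x) ^ 2 = -1 := by
  apply sq_eq_neg_one_of_trace_eq_zero
  rw [coe_mul_mul_of_trace_mul_eq_one htr hxy, trace_sub, trace_add, trace_smul, trace_one, ← htr]
  simp only [Fintype.card_fin, smul_eq_mul]
  ring

end TraceMulEqOne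

end Matrix.SpecialLinearGroup

theorem longitude_word_eq_pow_twelve {G : Type*} [Group G] [HasDistribNeg G] {x y z : G}
    (hbraid : x * y * x = y * x * y) (hyxy : (y * x * y) ^ 2 = -1) (hyzy : (y * z * y) ^ 2 = -1) :
    x ^ 6 * y⁻¹ * x⁻¹ * y * (z⁻¹ * y ^ (-2 : ℤ) * z⁻¹) * y * x⁻¹ * y⁻¹ = x ^ 12 := by
  have hword : x ^ 6 * y⁻¹ * x⁻¹ * y * (z⁻¹ * y ^ (-2 : ℤ) * z⁻¹) * y * x⁻¹ * y⁻¹ =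
      x ^ 6 * (y * x * y)⁻¹ * y ^ 3 * (y * z * y * (y * z * y))⁻¹ * y ^ 3 * (y * x * y)⁻¹ := by
    group
  have hconj : SemiconjBy (y * x * y) x y :=
    calc y * x * y * x = y * (x * y * x) := by group
      _ = y * (y * x * y) := by rw [hbraid]
  generalize y * x * y = a at hyxy hconj hword
  have hinv : a⁻¹ = -a := inv_eq_of_mul_eq_one_right (by rw [mul_neg, ← sq, hyxy, neg_neg])
  calc _ = -(x ^ 6 * (a * y ^ 6 * a)) := by
        rw [hword, ← sq (y * z * y), hyzy, hinv, inv_neg_one]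
        simp only [mul_neg, neg_mul, neg_neg, mul_one, mul_assoc, ← pow_add]
    _ = -(x ^ 6 * (a * a * x ^ 6)) := by
        rw [mul_assoc a, ← (hconj.pow_right 6).eq, mul_assoc]
    _ = x ^ 12 := by
        rw [← sq, hyxy]; simp only [neg_one_mul, mul_neg, neg_neg, ← pow_add]

/-- Core of the longitude computation for the 12-crossing knot `Q₂`: under the
trace conditions, `x⁶ y⁻¹ x⁻¹ y (z⁻¹ y⁻² z⁻¹) y x⁻¹ y⁻¹ = x¹²`. -/
theorem Q2_longitude
    (x y z : Matrix.SpecialLinearGroup (Fin 2) ℂ)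
    (hxy : trSL x = trSL y) (hxz : trSL x = trSL z)
    (cxy : trSL (x * y) = 1) (cyz : trSL (y * z) = 1) :
    x ^ 6 * y⁻¹ * x⁻¹ * y * (z⁻¹ * y ^ (-2 : ℤ) * z⁻¹) * y * x⁻¹ * y⁻¹ = x ^ 12 := by
  have cyx : trSL (y * x) = 1 := by
    rwa [trSL, Matrix.SpecialLinearGroup.coe_mul, Matrix.trace_mul_comm,
      ← Matrix.SpecialLinearGroup.coe_mul]
  exact longitude_word_eq_pow_twelve
    (Matrix.SpecialLinearGroup.mul_mul_eq_mul_mul_of_trace_mul_eq_one hxy cxy)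
    (Matrix.SpecialLinearGroup.mul_mul_sq_eq_neg_one_of_trace_mul_eq_one hxy.symm cyx)
    (Matrix.SpecialLinearGroup.mul_mul_sq_eq_neg_one_of_trace_mul_eq_one
      (hxy.symm.trans hxz) cyz)
end
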